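/- arXiv:1005.1949 — 10 statements merged into one kernel-verified Lean document; each statement's English description precedes it below -/
import Mathlib

section
/- Let p be a prime with p > n ≥ 2. The number of vectors v = (v_1,...,v_n) in (Z/pZ)^n such that v_i ≠ v_j for all 1 ≤ i < j ≤ n, and v_i ≠ v_n + a for all 1 ≤ i ≤ n-1 and all a ∈ {1,...,n-i}, equals p·(p-n)^{n-1}. -/
/-!
Fix `v_n = c` (`p` choices). The conditions then say that `v_1, …, v_{n-1}` are distinct and
that `v_i` avoids `F_i = {c, c + 1, …, c + (n - i)}`, which has `n - i + 1` elements as `n < p`.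
The sets `F_i` decrease with `i`, so the earlier values `v_j ∉ F_j ⊇ F_i` are `i - 1` distinct
values outside `F_i`, and `v_i` has exactly `p - (n - i + 1) - (i - 1) = p - n` choices.
-/
open Finset Function

theorem injective_iff_forall_lt_ne {ι β : Type*} [LinearOrder ι] {v : ι → β} :
    Injective v ↔ ∀ i j, i < j → v i ≠ v j :=
  injective_iff_pairwise_ne.trans pairwise_iff_lt

section InjectiveAvoiding

variable {α : Type*} [DecidableEq α]

theorem injective_cons_avoiding_iff {m : ℕ} (A : Fin (m + 1) → Finset α) (x : α)
    (w : Fin m → α) :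
    (Injective (Fin.cons x w : Fin (m + 1) → α) ∧
        ∀ i, (Fin.cons x w : Fin (m + 1) → α) i ∉ A i) ↔
      x ∉ A 0 ∧ Injective w ∧ ∀ i, w i ∉ insert x (A i.succ) := by
  simp only [Fin.cons_injective_iff, Fin.forall_fin_succ, Fin.cons_zero, Fin.cons_succ,
    mem_insert, not_or, Set.mem_range, not_exists, forall_and]
  grind

theorem card_injective_avoiding [Fintype α] :
    ∀ {m : ℕ} (A : Fin m → Finset α), Antitone A →
    Nat.card {v : Fin m → α // Injective v ∧ ∀ i, v i ∉ A i} =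
      ∏ i : Fin m, (Fintype.card α - #(A i) - i)
  | 0, A, _ => by
    rw [Fin.prod_univ_zero, Nat.card_eq_one_iff_unique]
    exact ⟨inferInstance, ⟨⟨finZeroElim, injective_of_subsingleton _, finZeroElim⟩⟩⟩
  | m + 1, A, hA => by
    have fiber (x : α) :
        Nat.card {w : Fin m → α //
            x ∉ A 0 ∧ Injective w ∧ ∀ i, w i ∉ insert x (A i.succ)} =
          if x ∈ (A 0)ᶜ then ∏ i : Fin m, (Fintype.card α - #(A i.succ) - (i + 1))
          else 0 := by
      by_cases hx : x ∈ A 0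
      · simp [hx]
      simp only [hx, mem_compl, not_false_eq_true, true_and, if_true]
      rw [card_injective_avoiding _ fun i j hij =>
        insert_subset_insert x (hA (Fin.succ_le_succ_iff.mpr hij))]
      refine prod_congr rfl fun i _ => ?_
      rw [card_insert_of_notMem fun h => hx (hA (Fin.zero_le _) h)]
      omega
    let e := ((Fin.consEquiv fun _ => α).subtypeEquiv
        (q := fun v => Injective v ∧ ∀ i, v i ∉ A i)
        fun q => (injective_cons_avoiding_iff A q.1 q.2).symm).symm.trans
      (Equiv.subtypeProdEquivSigmaSubtype fun x (w : Fin m → α) =>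
        x ∉ A 0 ∧ Injective w ∧ ∀ i, w i ∉ insert x (A i.succ))
    rw [Nat.card_congr e, Nat.card_sigma, Fin.prod_univ_succ]
    simp only [fiber, sum_ite_mem, univ_inter, sum_const, card_compl, smul_eq_mul, Fin.val_zero,
      Nat.sub_zero, Fin.val_succ]

end InjectiveAvoiding

section Ish

variable {R : Type*} [AddMonoidWithOne R] [DecidableEq R]

/-- Indices are shifted by one from the paper: `v : Fin (m + 1) → R` with `m = n - 1`, so
`v (Fin.last m)` is `v_n` and the bound `a ≤ n - i` on the paper's `i` becomes `a ≤ m - i`. -/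
def InIshComplement {m : ℕ} (v : Fin (m + 1) → R) : Prop :=
  (∀ i j, i < j → v i ≠ v j) ∧
    ∀ i : Fin (m + 1), ∀ a : ℕ, 1 ≤ a → a ≤ m - i → v i ≠ v (Fin.last m) + a

/-- The values `c + a`, `0 ≤ a ≤ m - i`, that `v i` must avoid when `v (Fin.last m) = c`;
`a = 0` accounts for `v i ≠ v (Fin.last m)`. -/
def ishForbidden {m : ℕ} (c : R) (i : Fin m) : Finset R :=
  (range (m - i + 1)).image fun a : ℕ => c + a

theorem antitone_ishForbidden {m : ℕ} (c : R) : Antitone (ishForbidden (m := m) c) :=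
  fun i j hij =>
    image_subset_image (range_subset_range.mpr (by simp only [Fin.le_def] at hij; omega))

theorem inIshComplement_snoc_iff {m : ℕ} (c : R) (w : Fin m → R) :
    InIshComplement (Fin.snoc w c : Fin (m + 1) → R) ↔
      Injective w ∧ ∀ i, w i ∉ ishForbidden c i := by
  rw [InIshComplement, ← injective_iff_forall_lt_ne, Fin.snoc_injective_iff, Fin.forall_fin_succ']
  simp only [Fin.snoc_castSucc, Fin.snoc_last, Fin.val_last, Fin.val_castSucc, ishForbidden,
    mem_image, mem_range, Set.mem_range, not_exists]
  constructor
  · rintro ⟨⟨hw, hc⟩, hshift, -⟩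
    refine ⟨hw, fun i a ⟨ha, h⟩ => ?_⟩
    rcases Nat.eq_zero_or_pos a with rfl | ha0
    · exact hc i (by simpa using h.symm)
    · exact hshift i a ha0 (by omega) h.symm
  · rintro ⟨hw, hforb⟩
    exact ⟨⟨hw, fun i h => hforb i 0 ⟨by omega, by simp [h]⟩⟩,
      fun i a _ ha h => hforb i a ⟨by omega, h.symm⟩, fun a _ _ => by omega⟩

theorem card_inIshComplement_eq_sum [Fintype R] (m : ℕ) :
    Nat.card {v : Fin (m + 1) → R // InIshComplement v} =
      ∑ c : R, Nat.card {w : Fin m → R // Injective w ∧ ∀ i, w i ∉ ishForbidden c i} := by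
  let e := ((Fin.snocEquiv fun _ => R).subtypeEquiv (q := InIshComplement)
      fun q => (inIshComplement_snoc_iff q.1 q.2).symm).symm.trans
    (Equiv.subtypeProdEquivSigmaSubtype fun c (w : Fin m → R) =>
      Injective w ∧ ∀ i, w i ∉ ishForbidden c i)
  rw [Nat.card_congr e, Nat.card_sigma]

end Ish

theorem card_ishForbidden {p m : ℕ} (hm : m < p) (c : ZMod p) (i : Fin m) :
    #(ishForbidden c i) = m - i + 1 := by
  rw [ishForbidden, card_image_of_injOn, card_range]
  intro a ha b hb hab
  simp only [coe_range, Set.mem_Iio] at ha hb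
  have := congrArg ZMod.val (add_left_cancel hab)
  rwa [ZMod.val_natCast_of_lt (by omega), ZMod.val_natCast_of_lt (by omega)] at this

theorem card_avoiding_ishForbidden {p m : ℕ} [NeZero p] (hm : m < p) (c : ZMod p) :
    Nat.card {w : Fin m → ZMod p // Injective w ∧ ∀ i, w i ∉ ishForbidden c i} =
      (p - (m + 1)) ^ m := by
  have choices (i : Fin m) : p - #(ishForbidden c i) - i = p - (m + 1) := by
    rw [card_ishForbidden hm]
    omega
  rw [card_injective_avoiding _ (antitone_ishForbidden c), ZMod.card,
    prod_congr rfl fun i _ => choices i, prod_const, card_fin]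

/-- Finite-field point count for the complement of the Ish arrangement:
`p * (p - n)^(n-1)` vectors avoid all Ish hyperplanes. -/
theorem ish_count (n p : ℕ) (hn : 2 ≤ n) (hnp : n < p) :
    Nat.card {v : Fin n → ZMod p //
      (∀ i j : Fin n, i < j → v i ≠ v j) ∧
      (∀ i : Fin n, ∀ a : ℕ, 1 ≤ a → a ≤ n - 1 - (i : ℕ) →
        v i ≠ v ⟨n - 1, by omega⟩ + (a : ZMod p))} = p * (p - n) ^ (n - 1) := by
  obtain ⟨m, rfl⟩ : ∃ m, n = m + 1 := ⟨n - 1, by omega⟩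
  have : NeZero p := ⟨by omega⟩
  change Nat.card {v : Fin (m + 1) → ZMod p // InIshComplement v} = _
  rw [card_inIshComplement_eq_sum,
    sum_congr rfl fun c _ => card_avoiding_ishForbidden (by omega) c, sum_const, card_univ,
    ZMod.card, smul_eq_mul, Nat.add_sub_cancel]
end

section
/- Let p be a prime with p > n ≥ 2. The number of vectors v in (Z/pZ)^n with v_i ≠ v_j for all i < j and v_i - v_j ∉ {0, 1} for all 1 ≤ i < j ≤ n equals p·(p-n)^{n-1}. -/
/-!
Read `v` as a placement of the labels `0, …, n-1` on the cycle `ℤ/p`. The Shi conditions say that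
distinct labels occupy distinct cells and that whenever label `a` sits in the cell just before
label `b`, then `a < b`: along every run of consecutive occupied cells the labels ascend.
Count the pairs `(v, e)` with `e` an empty cell in two ways. Each `v` leaves `p - n` cells empty.
Conversely, cutting the cycle at `e` gives an ascending-run placement on a line of `p - 1` cells,
and such a placement on `m` cells is determined by recording, for each label, how many empty
cells lie below it: since runs ascend, the labels sharing a gap count sit in increasing order,
and every function into `{0, …, m - n}` arises. Hence the number `N` of vectors satisfies
`N (p - n) = p (p - n)^n`.
-/

open Finset Function

def RunsAscend {α : Type*} [Add α] [One α] {n : ℕ} (g : Fin n → α) : Prop :=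
  Injective g ∧ ∀ a b, g a + 1 = g b → a < b

theorem lt_iff_lt_of_forall_lt_imp_lt {ι α β : Type*} [LinearOrder α] [Preorder β]
    {k : ι → α} {w : ι → β} (hk : Injective k) (h : ∀ a b, k a < k b → w a < w b) {a b : ι} :
    w a < w b ↔ k a < k b := by
  refine ⟨fun hw => ?_, h a b⟩
  rcases lt_trichotomy (k a) (k b) with hlt | heq | hgt
  · exact hlt
  · exact absurd hw (hk heq ▸ lt_irrefl _)
  · exact absurd hw (h b a hgt).not_gt

theorem injective_of_forall_lt_imp_lt {ι α β : Type*} [LinearOrder α] [Preorder β]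
    {k : ι → α} {w : ι → β} (hk : Injective k) (h : ∀ a b, k a < k b → w a < w b) :
    Injective w := by
  intro a b hab
  by_contra hne
  rcases lt_or_gt_of_ne (hk.ne hne) with hlt | hgt
  · exact (h a b hlt).ne hab
  · exact (h b a hgt).ne hab.symm

section Placements

variable {n : ℕ}

def gapsBelow (g : Fin n → ℕ) (x : ℕ) : ℕ := #{c ∈ range x | c ∉ univ.image g}

theorem card_filter_lt_add_gapsBelow {g : Fin n → ℕ} (hg : Injective g) (x : ℕ) :
    #{j | g j < x} + gapsBelow g x = x := by
  have hocc : {c ∈ range x | c ∈ univ.image g} = ({j | g j < x} : Finset (Fin n)).image g := by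
    ext c
    simp only [mem_filter, mem_range, mem_image, mem_univ, true_and]
    constructor
    · rintro ⟨hc, a, rfl⟩; exact ⟨a, hc, rfl⟩
    · rintro ⟨a, ha, rfl⟩; exact ⟨ha, a, rfl⟩
  have := card_filter_add_card_filter_not (s := range x) (· ∈ univ.image g)
  rwa [hocc, card_image_of_injective _ hg, card_range] at this

theorem gapsBelow_mono (g : Fin n → ℕ) : Monotone (gapsBelow g) := fun _ _ hxy =>
  card_le_card (filter_subset_filter _ (range_subset_range.2 hxy))

theorem mem_image_of_gapsBelow_le {g : Fin n → ℕ} {x y c : ℕ} (hxc : x ≤ c) (hcy : c < y)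
    (h : gapsBelow g y ≤ gapsBelow g x) : c ∈ univ.image g := by
  by_contra hc
  have hssub : {c ∈ range x | c ∉ univ.image g} ⊂ {c ∈ range y | c ∉ univ.image g} := by
    refine ssubset_iff_of_subset (filter_subset_filter _ (range_subset_range.2 (by omega)))
      |>.2 ⟨c, ?_, ?_⟩
    · simp only [mem_filter, mem_range]; exact ⟨hcy, hc⟩
    · simp only [mem_filter, mem_range, not_and]; omega
  exact (card_lt_card hssub).not_ge h

theorem RunsAscend.lt_of_forall_mem_image {g : Fin n → ℕ} (hg : RunsAscend g) {i j : Fin n}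
    (hji : g j < g i) (hocc : ∀ c, g j ≤ c → c < g i → c ∈ univ.image g) : j < i := by
  obtain ⟨d, hd⟩ := Nat.exists_eq_add_of_lt hji
  induction d generalizing i with
  | zero => exact hg.2 j i hd.symm
  | succ d ih =>
    obtain ⟨k, -, hk⟩ := mem_image.1 (hocc (g j + d + 1) (by omega) (by omega))
    have hjk : j < k := ih (by omega) (fun c h₁ h₂ => hocc c h₁ (by omega)) (by omega)
    exact hjk.trans (hg.2 k i (by omega))

theorem RunsAscend.toLex_lt_toLex {g : Fin n → ℕ} (hg : RunsAscend g) {i j : Fin n}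
    (hji : g j < g i) : toLex (gapsBelow g (g j), j) < toLex (gapsBelow g (g i), i) := by
  rw [Prod.Lex.toLex_lt_toLex]
  rcases (gapsBelow_mono g hji.le).lt_or_eq with hlt | heq
  · exact .inl hlt
  · exact .inr ⟨heq, hg.lt_of_forall_mem_image hji
      fun c h₁ h₂ => mem_image_of_gapsBelow_le h₁ h₂ heq.ge⟩

theorem injective_toLex_apply_mk (f : Fin n → ℕ) : Injective fun i => toLex (f i, i) :=
  fun _ _ h => (Prod.ext_iff.1 (toLex.injective h)).2

def lexRank (f : Fin n → ℕ) (i : Fin n) : ℕ := #{j | toLex (f j, j) < toLex (f i, i)}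

theorem lexRank_lt (f : Fin n → ℕ) (i : Fin n) : lexRank f i < n := by
  have : #({j | toLex (f j, j) < toLex (f i, i)} : Finset (Fin n)) < #(univ : Finset (Fin n)) :=
    card_lt_card (filter_ssubset.2 ⟨i, mem_univ i, lt_irrefl _⟩)
  simpa [lexRank] using this

theorem lexRank_lt_lexRank {f : Fin n → ℕ} {i j : Fin n}
    (h : toLex (f j, j) < toLex (f i, i)) : lexRank f j < lexRank f i := by
  refine card_lt_card ((ssubset_iff_of_subset fun k hk => ?_).2 ⟨j, ?_, ?_⟩)
  · simp only [mem_filter, mem_univ, true_and] at hk ⊢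
    exact hk.trans h
  · simpa using h
  · simp

/-- Inverse of the gap count: label `i` goes after `f i` empty cells and after every label `j`
with `(f j, j)` lexicographically smaller. -/
def placementOf (f : Fin n → ℕ) (i : Fin n) : ℕ := f i + lexRank f i

theorem placementOf_lt_placementOf {f : Fin n → ℕ} {i j : Fin n}
    (h : toLex (f j, j) < toLex (f i, i)) : placementOf f j < placementOf f i := by
  have hf : f j ≤ f i := (Prod.Lex.toLex_lt_toLex.1 h).elim le_of_lt fun h' => h'.1.le
  have := lexRank_lt_lexRank h
  unfold placementOf; omega

theorem placementOf_lt_iff (f : Fin n → ℕ) {i j : Fin n} :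
    placementOf f j < placementOf f i ↔ toLex (f j, j) < toLex (f i, i) :=
  lt_iff_lt_of_forall_lt_imp_lt (injective_toLex_apply_mk f) fun _ _ => placementOf_lt_placementOf

theorem runsAscend_placementOf (f : Fin n → ℕ) : RunsAscend (placementOf f) := by
  refine ⟨injective_of_forall_lt_imp_lt (injective_toLex_apply_mk f)
    fun _ _ => placementOf_lt_placementOf, fun a b hab => ?_⟩
  have hlt := (placementOf_lt_iff f).1 (show placementOf f a < placementOf f b by omega)
  rcases Prod.Lex.toLex_lt_toLex.1 hlt with hf | ⟨-, hab'⟩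
  · have := lexRank_lt_lexRank hlt
    unfold placementOf at hab; omega
  · exact hab'

theorem gapsBelow_placementOf (f : Fin n → ℕ) (i : Fin n) :
    gapsBelow (placementOf f) (placementOf f i) = f i := by
  have hsplit := card_filter_lt_add_gapsBelow (runsAscend_placementOf f).1 (placementOf f i)
  have hrank : #{j | placementOf f j < placementOf f i} = lexRank f i :=
    congrArg card (filter_congr fun j _ => placementOf_lt_iff f)
  rw [hrank] at hsplit
  change _ + _ = f i + lexRank f i at hsplit
  omega

theorem RunsAscend.placementOf_gapsBelow {g : Fin n → ℕ} (hg : RunsAscend g) :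
    placementOf (fun i => gapsBelow g (g i)) = g := by
  funext i
  have hsplit := card_filter_lt_add_gapsBelow hg.1 (g i)
  have hrank : lexRank (fun i => gapsBelow g (g i)) i = #{j | g j < g i} :=
    congrArg card (filter_congr fun j _ =>
      (lt_iff_lt_of_forall_lt_imp_lt hg.1 fun _ _ => hg.toLex_lt_toLex))
  change gapsBelow g (g i) + _ = g i
  omega

theorem gapsBelow_lt {m : ℕ} {g : Fin n → ℕ} (hg : Injective g) (hm : ∀ i, g i < m) (i : Fin n) :
    gapsBelow g (g i) < m + 1 - n := by
  have hsplit := card_filter_lt_add_gapsBelow hg m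
  rw [filter_true_of_mem fun j _ => hm j, card_univ, Fintype.card_fin] at hsplit
  have := gapsBelow_mono g (hm i).le
  omega

theorem placementOf_lt {m : ℕ} {f : Fin n → ℕ} (hf : ∀ i, f i < m + 1 - n) (i : Fin n) :
    placementOf f i < m := by
  have := lexRank_lt f i
  have := hf i
  unfold placementOf; omega

def gapsEquiv (m : ℕ) :
    {g : Fin n → ℕ // (∀ i, g i < m) ∧ RunsAscend g} ≃ (Fin n → Fin (m + 1 - n)) where
  toFun g i := ⟨gapsBelow g.1 (g.1 i), gapsBelow_lt g.2.2.1 g.2.1 i⟩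
  invFun f := ⟨placementOf fun i => f i, placementOf_lt fun i => (f i).2,
    runsAscend_placementOf _⟩
  left_inv g := Subtype.ext g.2.2.placementOf_gapsBelow
  right_inv _ := funext fun i => Fin.ext (gapsBelow_placementOf _ i)

theorem card_runsAscend_lt (m n : ℕ) :
    Nat.card {g : Fin n → ℕ // (∀ i, g i < m) ∧ RunsAscend g} = (m + 1 - n) ^ n := by
  rw [Nat.card_congr (gapsEquiv m), Nat.card_fun, Nat.card_fin, Nat.card_fin]

end Placements

theorem card_notMem_range {α : Type*} [Finite α] {n : ℕ} {v : Fin n → α} (hv : Injective v) :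
    Nat.card {e // e ∉ Set.range v} = Nat.card α - n := by
  have hrange : (Set.range v).ncard = n := by rw [Set.ncard_range_of_injective hv, Nat.card_fin]
  calc Nat.card {e // e ∉ Set.range v} = (Set.range v)ᶜ.ncard := Nat.card_coe_set_eq _
    _ = Nat.card α - n := by rw [Set.ncard_compl, hrange]

theorem card_sigma_notMem_range {α : Type*} [Add α] [One α] [Finite α] {n : ℕ} :
    Nat.card (Σ v : {v : Fin n → α // RunsAscend v}, {e // e ∉ Set.range v.1}) =
      Nat.card {v : Fin n → α // RunsAscend v} * (Nat.card α - n) := by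
  have := Fintype.ofFinite {v : Fin n → α // RunsAscend v}
  rw [Nat.card_sigma, Nat.card_eq_fintype_card (α := {v // _}), ← smul_eq_mul, ← card_univ,
    ← sum_const]
  exact sum_congr rfl fun v _ => card_notMem_range v.2.1

section Cycle

variable {α : Type*} [AddCommGroupWithOne α] {n : ℕ}

theorem shiFree_iff_runsAscend [NeZero (1 : α)] (v : Fin n → α) :
    ((∀ i j : Fin n, i < j → v i ≠ v j) ∧
      (∀ i j : Fin n, i < j → v i - v j ≠ 0 ∧ v i - v j ≠ 1)) ↔ RunsAscend v := by
  constructor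
  · rintro ⟨hne, hsub⟩
    refine ⟨Injective.of_lt_imp_ne hne, fun a b hab => ?_⟩
    rcases lt_trichotomy a b with hlt | rfl | hgt
    · exact hlt
    · exact absurd (add_eq_left.1 hab) one_ne_zero
    · exact absurd (by rw [← hab]; abel) (hsub b a hgt).2
  · rintro ⟨hinj, hadj⟩
    refine ⟨fun i j hij => hinj.ne hij.ne, fun i j hij => ⟨sub_ne_zero.2 (hinj.ne hij.ne), ?_⟩⟩
    intro h
    exact (hadj j i (by rw [← h]; abel)).not_gt hij

theorem runsAscend_add_const_iff (v : Fin n → α) (c : α) :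
    RunsAscend (fun i => v i + c) ↔ RunsAscend v := by
  refine and_congr ((add_left_injective c).of_comp_iff v) (forall₂_congr fun a b => ?_)
  rw [add_right_comm, add_left_inj]

/-- Cut the cycle at the empty cell `e` and translate `e` to `-1`. -/
def cutEquiv : (Σ v : {v : Fin n → α // RunsAscend v}, {e // e ∉ Set.range v.1}) ≃
    α × {w : Fin n → α // RunsAscend w ∧ -1 ∉ Set.range w} where
  toFun x := (x.2, ⟨fun i => x.1.1 i + -(x.2 + 1), (runsAscend_add_const_iff _ _).2 x.1.2,
    fun ⟨i, hi⟩ => x.2.2 ⟨i, (add_neg_eq_iff_eq_add.1 hi).trans (by abel)⟩⟩)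
  invFun y := ⟨⟨fun i => y.2.1 i + (y.1 + 1), (runsAscend_add_const_iff _ _).2 y.2.2.1⟩,
    ⟨y.1, fun ⟨i, hi⟩ => y.2.2.2 ⟨i, (eq_sub_of_add_eq hi).trans (by abel)⟩⟩⟩
  left_inv _ := Sigma.subtype_ext (Subtype.ext (funext fun _ => neg_add_cancel_right _ _)) rfl
  right_inv _ := Prod.ext rfl (Subtype.ext (funext fun _ => add_neg_cancel_right _ _))

end Cycle

namespace ZMod

variable {p : ℕ}

theorem val_lt_sub_one_iff [NeZero p] {x : ZMod p} : x.val < p - 1 ↔ x ≠ -1 := by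
  obtain ⟨q, rfl⟩ := Nat.exists_eq_succ_of_ne_zero (NeZero.ne p)
  rw [Nat.succ_sub_one, Ne, ← (val_injective _).eq_iff, val_neg_one]
  have := x.val_lt
  omega

theorem val_add_one_of_ne_neg_one [Fact (1 < p)] {x : ZMod p} (hx : x ≠ -1) :
    (x + 1).val = x.val + 1 := by
  have := val_lt_sub_one_iff.2 hx
  rw [val_add_of_lt (by rw [val_one]; omega), val_one]

end ZMod

section Line

variable {n p : ℕ} [Fact (1 < p)]

theorem runsAscend_val_iff {w : Fin n → ZMod p} (hw : ∀ i, w i ≠ -1) :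
    RunsAscend (fun i => (w i).val) ↔ RunsAscend w := by
  refine and_congr ((ZMod.val_injective p).of_comp_iff w) (forall₂_congr fun a b => ?_)
  rw [← ZMod.val_add_one_of_ne_neg_one (hw a), (ZMod.val_injective p).eq_iff]

variable (n p) in
def valEquiv : {w : Fin n → ZMod p // RunsAscend w ∧ -1 ∉ Set.range w} ≃
    {g : Fin n → ℕ // (∀ i, g i < p - 1) ∧ RunsAscend g} where
  toFun w :=
    have hw : ∀ i, w.1 i ≠ -1 := fun i hi => w.2.2 ⟨i, hi⟩
    ⟨fun i => (w.1 i).val, fun i => ZMod.val_lt_sub_one_iff.2 (hw i),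
      (runsAscend_val_iff hw).2 w.2.1⟩
  invFun g :=
    have hval : ∀ i, ((g.1 i : ℕ) : ZMod p).val = g.1 i :=
      fun i => ZMod.val_natCast_of_lt (by have := g.2.1 i; omega)
    have hw : ∀ i, ((g.1 i : ℕ) : ZMod p) ≠ -1 :=
      fun i => ZMod.val_lt_sub_one_iff.1 ((hval i).symm ▸ g.2.1 i)
    ⟨fun i => g.1 i, (runsAscend_val_iff hw).1 (by simpa only [hval] using g.2.2),
      fun ⟨i, hi⟩ => hw i hi⟩
  left_inv w := Subtype.ext (funext fun i => ZMod.natCast_zmod_val (w.1 i))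
  right_inv g := Subtype.ext (funext fun i => ZMod.val_natCast_of_lt (by have := g.2.1 i; omega))

end Line

theorem card_runsAscend_zmod (n p : ℕ) [Fact (1 < p)] :
    Nat.card {v : Fin n → ZMod p // RunsAscend v} * (p - n) = p * (p - n) ^ n := by
  calc Nat.card {v : Fin n → ZMod p // RunsAscend v} * (p - n)
      = Nat.card (Σ v : {v : Fin n → ZMod p // RunsAscend v}, {e // e ∉ Set.range v.1}) := by
        rw [card_sigma_notMem_range, Nat.card_zmod]
    _ = p * Nat.card {g : Fin n → ℕ // (∀ i, g i < p - 1) ∧ RunsAscend g} := by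
        rw [Nat.card_congr cutEquiv, Nat.card_prod, Nat.card_zmod, Nat.card_congr (valEquiv n p)]
    _ = p * (p - n) ^ n := by
        rw [card_runsAscend_lt, Nat.sub_add_cancel (Fact.out : 1 < p).le]

theorem shi_count_general (n p : ℕ) (hn : 2 ≤ n) (hnp : n < p) :
    Nat.card {v : Fin n → ZMod p //
      (∀ i j : Fin n, i < j → v i ≠ v j) ∧
      (∀ i j : Fin n, i < j → v i - v j ≠ 0 ∧ v i - v j ≠ 1)} = p * (p - n) ^ (n - 1) := by
  have : Fact (1 < p) := ⟨by omega⟩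
  rw [Nat.card_congr (Equiv.subtypeEquivRight fun v => shiFree_iff_runsAscend v)]
  apply Nat.eq_of_mul_eq_mul_right (Nat.sub_pos_of_lt hnp)
  rw [card_runsAscend_zmod, mul_assoc, ← pow_succ, Nat.sub_add_cancel (by omega)]

/-- Finite-field point count for the complement of the Shi arrangement:
`p * (p - n)^(n-1)` vectors avoid all Shi hyperplanes. -/
theorem shi_count (n p : ℕ) (hp : p.Prime) (hn : 2 ≤ n) (hnp : n < p) :
    Nat.card {v : Fin n → ZMod p //
      (∀ i j : Fin n, i < j → v i ≠ v j) ∧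
      (∀ i j : Fin n, i < j → v i - v j ≠ 0 ∧ v i - v j ≠ 1)} = p * (p - n) ^ (n - 1) :=
  shi_count_general n p hn hnp
end

section
/- Let w̃ be an affine permutation of size n whose window values are increasing: w̃(1) < w̃(2) < ... < w̃(n). Then Σ_{i=1}^{n-1} ⌊(w̃(n) - w̃(i))/n⌋ = w̃(n) - n. -/
/-!
Since `n * ⌊x / n⌋ = x - x % n`, the sum is read off from `Σ w̃(i)` and from the sum of the
residues of `w̃(n) - w̃(i)` modulo `n`. An injective `w̃` commuting with translation by `n` sends
incongruent integers to incongruent ones, so over the window `1, …, n` these residues are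
`0, …, n - 1` in some order and sum to `n(n - 1)/2`; with `Σ w̃(i) = n(n + 1)/2` this leaves
`n (w̃(n) - n)`. The term `i = n` vanishes, so the window may be taken to be all of `1, …, n`.
-/

open Finset

theorem Int.sum_Ico_zero_id_mul_two (n : ℕ) : (∑ i ∈ Ico (0 : ℤ) n, i) * 2 = n * (n - 1) := by
  induction n with
  | zero => simp
  | succ n ih =>
    rw [Nat.cast_succ, ← insert_Ico_right_eq_Ico_add_one (by positivity), sum_insert (by simp),
      add_mul, ih]
    ring

theorem Int.sum_emod_eq_sum_Ico_of_injOn {ι : Type*} {s : Finset ι} {g : ι → ℤ} {n : ℕ}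
    (hn : 0 < n) (hs : #s = n) (hg : Set.InjOn (fun i => g i % n) s) :
    ∑ i ∈ s, g i % n = ∑ r ∈ Ico (0 : ℤ) n, r := by
  have hn' : (0 : ℤ) < n := by exact_mod_cast hn
  have himage : s.image (fun i => g i % n) = Ico (0 : ℤ) n := by
    refine eq_of_subset_of_card_le (fun r hr => ?_) (by simp [card_image_of_injOn hg, hs])
    obtain ⟨i, -, rfl⟩ := mem_image.mp hr
    exact mem_Ico.mpr ⟨Int.emod_nonneg _ hn'.ne', Int.emod_lt_of_pos _ hn'⟩
  rw [← himage, sum_image hg]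

theorem Int.ModEq.eq_of_abs_sub_lt {n a b : ℤ} (h : a ≡ b [ZMOD n]) (hab : |b - a| < n) :
    a = b := by
  have := Int.eq_zero_of_abs_lt_dvd h.dvd hab
  omega

theorem Function.Injective.modEq_of_map_modEq {f : ℤ → ℤ} {n : ℤ} (hf : Function.Injective f)
    (hper : ∀ k, f (k + n) = f k + n) {i j : ℤ} (h : f i ≡ f j [ZMOD n]) : i ≡ j [ZMOD n] := by
  obtain ⟨t, ht⟩ := Int.modEq_iff_add_fac.mp h
  have hshift : Function.Periodic (fun k => f k - k) n := fun k => by simp only [hper]; ring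
  have hmap : f (i + t * n) = f j := by
    have := hshift.int_mul t i
    rw [Int.cast_id] at this
    linarith
  exact Int.modEq_iff_add_fac.mpr ⟨t, by rw [← hf hmap, mul_comm]⟩

theorem Function.Injective.injOn_sub_emod_window {f : ℤ → ℤ} {n : ℤ}
    (hf : Function.Injective f) (hper : ∀ k, f (k + n) = f k + n) (c : ℤ) :
    Set.InjOn (fun i => (c - f i) % n) (Set.Icc 1 n) := by
  intro i hi j hj hij
  have hmod : f i ≡ f j [ZMOD n] := by
    simpa using Int.ModEq.sub_left c (show c - f i ≡ c - f j [ZMOD n] from hij)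
  refine (hf.modEq_of_map_modEq hper hmod).eq_of_abs_sub_lt (abs_sub_lt_iff.mpr ⟨?_, ?_⟩) <;>
    grind only [Set.mem_Icc]

theorem ish_formula_general (n : ℕ) (hn : 1 ≤ n) (f : Equiv.Perm ℤ)
    (h1 : ∀ k : ℤ, f (k + n) = f k + n)
    (h2 : ∑ i ∈ Finset.Icc (1 : ℤ) (n : ℤ), f i = n * (n + 1) / 2) :
    ∑ i ∈ Finset.Icc (1 : ℤ) ((n : ℤ) - 1), Int.fdiv (f (n : ℤ) - f i) (n : ℤ)
      = f (n : ℤ) - n := by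
  set a := f n
  have hn0 : (0 : ℤ) < n := by exact_mod_cast hn
  have hwindow : ∑ i ∈ Icc (1 : ℤ) (n - 1), Int.fdiv (a - f i) n
      = ∑ i ∈ Icc (1 : ℤ) n, Int.fdiv (a - f i) n := by
    rw [← insert_Icc_sub_one_right_eq_Icc (by omega : (1 : ℤ) ≤ n), sum_insert (by simp),
      sub_self, Int.zero_fdiv, zero_add]
  have hfdiv : ∀ x : ℤ, n * Int.fdiv x n = x - x % n := fun x => by
    rw [Int.fdiv_eq_ediv_of_nonneg _ hn0.le, Int.emod_def]; ring
  have hsum : (∑ i ∈ Icc (1 : ℤ) n, f i) * 2 = n * (n + 1) := by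
    rw [h2]; exact Int.ediv_mul_cancel (even_iff_two_dvd.mp (Int.even_mul_succ_self n))
  have hres : (∑ i ∈ Icc (1 : ℤ) n, (a - f i) % n) * 2 = n * (n - 1) := by
    have hinj := f.injective.injOn_sub_emod_window h1 a
    rw [← coe_Icc] at hinj
    rw [Int.sum_emod_eq_sum_Ico_of_injOn hn (by simp) hinj, Int.sum_Ico_zero_id_mul_two]
  have hmul : n * ∑ i ∈ Icc (1 : ℤ) n, Int.fdiv (a - f i) n
      = n * a - ∑ i ∈ Icc (1 : ℤ) n, f i - ∑ i ∈ Icc (1 : ℤ) n, (a - f i) % n := by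
    rw [mul_sum, sum_congr rfl fun i _ => hfdiv (a - f i), sum_sub_distrib, sum_sub_distrib,
      sum_const, Int.card_Icc, add_sub_cancel_right, Int.toNat_natCast, nsmul_eq_mul]
  rw [hwindow]
  refine mul_left_cancel₀ (by positivity : (n : ℤ) * 2 ≠ 0) ?_
  linear_combination 2 * hmul - hsum - hres

/-- For an affine permutation with increasing window values,
`Σ_{i=1}^{n-1} ⌊(w̃(n) - w̃(i))/n⌋ = w̃(n) - n`. -/
theorem ish_formula (n : ℕ) (hn : 1 ≤ n) (f : Equiv.Perm ℤ)
    (h1 : ∀ k : ℤ, f (k + n) = f k + n)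
    (h2 : ∑ i ∈ Finset.Icc (1 : ℤ) (n : ℤ), f i = n * (n + 1) / 2)
    (hinc : ∀ i j : ℤ, 1 ≤ i → i < j → j ≤ n → f i < f j) :
    ∑ i ∈ Finset.Icc (1 : ℤ) ((n : ℤ) - 1), Int.fdiv (f (n : ℤ) - f i) (n : ℤ)
      = f (n : ℤ) - n :=
  ish_formula_general n hn f h1 h2
end

section
/- For an affine permutation w̃ of size n, define ish(w̃) as follows: let ũ be the affine permutation whose window [ũ(1),...,ũ(n)] is the increasing rearrangement of [w̃(1),...,w̃(n)]; then ish(w̃) = max_{1≤i≤n} w̃(i) − n. -/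
/-!
Write each `j > n` as `j = i + t n` with `1 ≤ i ≤ n` and `t ≥ 1`, so that `u j = u i + t n`.
As `u j ≠ u n` for `j > n`, the inversions `u j < u n` are counted by `∑ᵢ ⌊(u n - u i) / n⌋`.
Because `u` is a bijection commuting with `· + n`, the residues of `u n - u i` modulo `n` are
`0, …, n - 1`, each once; hence `n · ∑ᵢ ⌊(u n - u i) / n⌋ = n · u n - n(n+1)/2 - n(n-1)/2`,
which is `n (u n - n)`. Finally `u n = max f`, the windows of `u` and `f` having the same values.
-/

open Finset

theorem Finset.sup'_eq_of_map_val_eq {ι α : Type*} [SemilatticeSup α] {s : Finset ι}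
    (H : s.Nonempty) {f g : ι → α} (h : s.val.map f = s.val.map g) : s.sup' H f = s.sup' H g := by
  classical
  have himage : s.image f = s.image g := Finset.val_inj.mp (by simp only [image_val, h])
  have := sup'_image (H.image f) id
  simp_rw [himage, sup'_image] at this
  exact this.symm

theorem Int.two_mul_sum_emod_of_injOn {ι : Type*} {s : Finset ι} {g : ι → ℤ} {n : ℕ}
    (hs : #s = n) (hg : Set.InjOn (fun i => g i % n) s) :
    2 * ∑ i ∈ s, g i % n = n * (n - 1) := by
  rcases Nat.eq_zero_or_pos n with rfl | hn
  · simp [card_eq_zero.mp hs]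
  have hnZ : (0 : ℤ) < n := by exact_mod_cast hn
  set r : ι → ℕ := fun i => (g i % n).toNat
  have hr : ∀ i, (r i : ℤ) = g i % n := fun i => Int.toNat_of_nonneg (Int.emod_nonneg _ hnZ.ne')
  have hrinj : Set.InjOn r s := fun i hi j hj h =>
    hg hi hj (by simpa [hr] using congrArg (Nat.cast (R := ℤ)) h)
  have himage : s.image r = Finset.range n := by
    refine eq_of_subset_of_card_le (fun k hk => ?_)
      (by rw [card_image_of_injOn hrinj, hs, card_range])
    obtain ⟨i, -, rfl⟩ := mem_image.mp hk
    have := hr i ▸ Int.emod_lt_of_pos (g i) hnZ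
    exact mem_range.mpr (by exact_mod_cast this)
  have hsum : ∑ i ∈ s, r i = ∑ k ∈ Finset.range n, k := by rw [← himage, sum_image hrinj]
  have := congrArg (Nat.cast (R := ℤ)) (sum_range_id_mul_two n)
  push_cast [← hsum, Nat.cast_sub hn, hr] at this
  linarith

section AffinePerm

variable {n : ℕ} {u : ℤ → ℤ}

theorem Int.eq_of_mem_Icc_of_add_mul_eq {i j s t : ℤ} (hi : i ∈ Icc 1 (n : ℤ))
    (hj : j ∈ Icc 1 (n : ℤ)) (h : i + s * n = j + t * n) : i = j := by
  rw [mem_Icc] at hi hj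
  have hmod : (i - 1) % n = (j - 1) % n := by
    rw [show i - 1 = (j - 1) + (t - s) * n by linarith, Int.add_mul_emod_self_right]
  rwa [Int.emod_eq_of_lt (by omega) (by omega), Int.emod_eq_of_lt (by omega) (by omega),
    sub_left_inj] at hmod

theorem Int.exists_mem_Icc_add_mul (hn : 0 < n) (j : ℤ) :
    ∃ i ∈ Icc 1 (n : ℤ), ∃ t, j = i + t * n := by
  have hnZ : (0 : ℤ) < n := by exact_mod_cast hn
  refine ⟨(j - 1) % n + 1, mem_Icc.mpr ⟨?_, ?_⟩, (j - 1) / n, ?_⟩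
  · linarith [Int.emod_nonneg (j - 1) hnZ.ne']
  · linarith [Int.emod_lt_of_pos (j - 1) hnZ]
  · linarith [Int.mul_ediv_add_emod (j - 1) n]

open AddConstMap in
theorem map_add_mul_of_map_add (hu : ∀ k, u (k + n) = u k + n) (k t : ℤ) :
    u (k + t * n) = u k + t * n := by
  simpa using AddConstMapClass.map_add_zsmul (⟨u, hu⟩ : ℤ →+c[(n : ℤ), (n : ℤ)] ℤ) k t

theorem eq_of_map_modEq (hu : ∀ k, u (k + n) = u k + n) (hinj : Function.Injective u) {i j : ℤ}
    (hi : i ∈ Icc 1 (n : ℤ)) (hj : j ∈ Icc 1 (n : ℤ)) (h : u i ≡ u j [ZMOD n]) : i = j := by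
  obtain ⟨t, ht⟩ := h.dvd
  have hj' : j = i + t * n := hinj <| by rw [map_add_mul_of_map_add hu]; linarith
  exact Int.eq_of_mem_Icc_of_add_mul_eq hi hj (s := t) (t := 0) (by rw [hj']; ring)

theorem mem_biUnion_image_add_mul_iff (hn : 0 < n) (hu : ∀ k, u (k + n) = u k + n)
    (hinj : Function.Injective u) (j : ℤ) :
    j ∈ (Icc 1 (n : ℤ)).biUnion (fun i => (Icc 1 ((u n - u i) / n)).image (i + · * n)) ↔
      n < j ∧ u j < u n := by
  have hnZ : (0 : ℤ) < n := by exact_mod_cast hn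
  simp only [mem_biUnion, mem_image, mem_Icc, Int.le_ediv_iff_mul_le hnZ]
  constructor
  · rintro ⟨i, ⟨hi1, -⟩, t, ⟨ht1, htD⟩, rfl⟩
    have hnj : (n : ℤ) < i + t * n := by nlinarith
    refine ⟨hnj, lt_of_le_of_ne (by rw [map_add_mul_of_map_add hu]; linarith) ?_⟩
    exact fun h => hnj.ne' (hinj h)
  · rintro ⟨hnj, hjn⟩
    obtain ⟨i, hi, t, rfl⟩ := Int.exists_mem_Icc_add_mul hn j
    rw [mem_Icc] at hi
    have ht : 0 < t := pos_of_mul_pos_left (by linarith) hnZ.le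
    rw [map_add_mul_of_map_add hu] at hjn
    exact ⟨i, hi, t, ⟨ht, by linarith⟩, rfl⟩

theorem card_lt_and_map_lt (hn : 0 < n) (hu : ∀ k, u (k + n) = u k + n)
    (hinj : Function.Injective u) :
    Nat.card {j : ℤ // n < j ∧ u j < u n} = ∑ i ∈ Icc 1 (n : ℤ), ((u n - u i) / n).toNat := by
  rw [← Nat.card_congr (Equiv.subtypeEquivRight (mem_biUnion_image_add_mul_iff hn hu hinj)),
    Nat.card_eq_finsetCard, card_biUnion]
  · refine sum_congr rfl fun i _ => ?_
    rw [card_image_of_injective _ fun s t h => ?_, Int.card_Icc, add_sub_cancel_right]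
    exact mul_right_cancel₀ (by exact_mod_cast hn.ne') (add_left_cancel h)
  · intro i hi i' hi' hne
    refine disjoint_left.mpr fun x hx hx' => hne ?_
    obtain ⟨s, -, rfl⟩ := mem_image.mp hx
    obtain ⟨s', -, hs'⟩ := mem_image.mp hx'
    exact Int.eq_of_mem_Icc_of_add_mul_eq hi hi' hs'.symm

theorem sum_sub_ediv_eq (hn : 0 < n) (hu : ∀ k, u (k + n) = u k + n) (hinj : Function.Injective u)
    (hsum : ∑ i ∈ Icc 1 (n : ℤ), u i = n * (n + 1) / 2) :
    ∑ i ∈ Icc 1 (n : ℤ), (u n - u i) / n = u n - n := by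
  have hcard : #(Icc 1 (n : ℤ)) = n := by simp
  have hres : 2 * ∑ i ∈ Icc 1 (n : ℤ), (u n - u i) % n = n * (n - 1) :=
    Int.two_mul_sum_emod_of_injOn hcard fun i hi j hj h =>
      eq_of_map_modEq hu hinj hi hj (by simpa using Int.ModEq.sub_left (u n) h)
  have hdiv : n * ∑ i ∈ Icc 1 (n : ℤ), (u n - u i) / n
      = ∑ i ∈ Icc 1 (n : ℤ), (u n - u i) - ∑ i ∈ Icc 1 (n : ℤ), (u n - u i) % n := by
    simp only [mul_sum, ← sum_sub_distrib, Int.emod_def, sub_sub_cancel]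
  have hgauss : 2 * ((n : ℤ) * (n + 1) / 2) = n * (n + 1) :=
    Int.mul_ediv_cancel' (Int.even_mul_succ_self n).two_dvd
  rw [sum_sub_distrib, sum_const, hcard, hsum, nsmul_eq_mul] at hdiv
  refine mul_left_cancel₀ (by positivity : (2 * n : ℤ) ≠ 0) ?_
  linear_combination 2 * hdiv - hres - hgauss

end AffinePerm

/-- Lemma 4.2: for an affine permutation `w̃` of size `n` with increasing rearrangement `ũ`
of its window, the `ish` statistic — the number of `j > n` with `ũ(n) > ũ(j)` — equals
`max_{1 ≤ i ≤ n} w̃(i) − n`. -/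
theorem ish_eq_max_sub_n (n : ℕ) (hn : 1 ≤ n) (f u : Equiv.Perm ℤ)
    (hu1 : ∀ k : ℤ, u (k + n) = u k + n)
    (hu2 : ∑ i ∈ Finset.Icc (1 : ℤ) (n : ℤ), u i = n * (n + 1) / 2)
    (huinc : ∀ i j : ℤ, 1 ≤ i → i < j → j ≤ n → u i < u j)
    (hrearr : Multiset.map (⇑u) (Finset.Icc (1 : ℤ) (n : ℤ)).val
      = Multiset.map (⇑f) (Finset.Icc (1 : ℤ) (n : ℤ)).val) :
    (Nat.card {j : ℤ // (n : ℤ) < j ∧ u j < u (n : ℤ)} : ℤ)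
      = (Finset.Icc (1 : ℤ) (n : ℤ)).sup'
          (Finset.nonempty_Icc.mpr (by exact_mod_cast hn)) (⇑f) - n := by
  have hmax : ∀ i ∈ Icc 1 (n : ℤ), u i ≤ u n := fun i hi =>
    (mem_Icc.mp hi).2.eq_or_lt.elim (fun h => h ▸ le_rfl)
      fun h => (huinc i n (mem_Icc.mp hi).1 h le_rfl).le
  have hsup : (Icc 1 (n : ℤ)).sup' (nonempty_Icc.mpr (by exact_mod_cast hn)) f = u n := by
    rw [← sup'_eq_of_map_val_eq _ hrearr]
    exact le_antisymm (sup'_le _ _ hmax) (le_sup' u (right_mem_Icc.mpr (by exact_mod_cast hn)))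
  rw [hsup, card_lt_and_map_lt hn hu1 u.injective, Nat.cast_sum, sum_congr rfl fun i hi =>
    Int.toNat_of_nonneg (Int.ediv_nonneg (sub_nonneg.mpr (hmax i hi)) n.cast_nonneg)]
  exact sum_sub_ediv_eq hn hu1 u.injective hu2
end

section
/- Let w̃ be an affine permutation of size n with decomposition w̃(i) = w(i) + n·r(i) (w ∈ S_n, r ∈ Q). Let j ∈ {1,...,n} be the largest index at which r attains its minimum value. Then ish(w̃⁻¹) = j + n·(−r(j) − 1). -/
/-!
Inverting `w̃(i) = w(i) + n·r(i)` with the `n`-periodicity of `w̃⁻¹` gives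
`w̃⁻¹(w(i)) = i − n·r(i)`, so the window values of `w̃⁻¹` are the numbers `i − n·r(i)`.
Since `1 ≤ i ≤ n`, a strictly larger `r(i)` costs at least `n` and cannot be compensated
by the index, so the maximum is taken at the largest minimiser `j` of `r`.
-/

open Equiv Finset

theorem Equiv.Perm.symm_apply_add_zsmul {α : Type*} [AddGroup α] {f : Perm α} {c : α}
    (h : ∀ k, f (k + c) = f k + c) (t : ℤ) (k : α) : f.symm (k + t • c) = f.symm k + t • c := by
  have hcomm : Commute f (Equiv.addRight c) := Equiv.ext h
  simpa [zsmul_addRight] using congr($((hcomm.inv_left.zpow_right t).eq) k)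

theorem Equiv.Perm.symm_apply_of_apply_eq_add_mul {n : ℕ} {f : Perm ℤ}
    (h : ∀ k : ℤ, f (k + n) = f k + n) {a b t : ℤ} (hab : f a = b + n * t) :
    f.symm b = a - n * t := by
  have := f.symm_apply_add_zsmul h t b
  rw [smul_eq_mul, mul_comm, ← hab, symm_apply_apply] at this
  linarith

theorem mem_Icc_iff_exists_perm_apply_add_one {n : ℕ} (w : Perm (Fin n)) {m : ℤ} :
    m ∈ Icc (1 : ℤ) n ↔ ∃ i : Fin n, ((w i : ℕ) : ℤ) + 1 = m := by
  rw [mem_Icc]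
  constructor
  · intro hm
    refine ⟨w.symm ⟨(m - 1).toNat, by omega⟩, ?_⟩
    rw [apply_symm_apply, Fin.val_mk]
    omega
  · rintro ⟨i, rfl⟩
    have := (w i).isLt
    omega

theorem val_sub_mul_le_of_isLastMin {n : ℕ} {r : Fin n → ℤ} {j : Fin n}
    (hjmin : ∀ k, r j ≤ r k) (hjmax : ∀ k, r k = r j → k ≤ j) (i : Fin n) :
    ((i : ℕ) : ℤ) - n * r i ≤ (j : ℕ) - n * r j := by
  rcases (hjmin i).eq_or_lt with heq | hlt
  · have : ((i : ℕ) : ℤ) ≤ (j : ℕ) := by exact_mod_cast hjmax i heq.symm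
    rw [← heq]
    linarith
  · have hi : ((i : ℕ) : ℤ) < n := by exact_mod_cast i.isLt
    have hr : (n : ℤ) * (r j + 1) ≤ n * r i := by gcongr; exact hlt
    linarith

/-- The `0`-based `j : Fin n` corresponds to position `j+1`. -/
theorem inverse_ish_formula (n : ℕ) (hn : 1 ≤ n) (f : Equiv.Perm ℤ)
    (h1 : ∀ k : ℤ, f (k + n) = f k + n)
    (w : Equiv.Perm (Fin n)) (r : Fin n → ℤ)
    (hwindow : ∀ i : Fin n, f ((i : ℕ) + 1 : ℤ) = ((w i : ℕ) : ℤ) + 1 + n * r i)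
    (j : Fin n) (hjmin : ∀ k : Fin n, r j ≤ r k)
    (hjmax : ∀ k : Fin n, r k = r j → k ≤ j) :
    (Finset.Icc (1 : ℤ) (n : ℤ)).sup'
        (Finset.nonempty_Icc.mpr (by exact_mod_cast hn)) (⇑f.symm) - n
      = ((j : ℕ) : ℤ) + 1 + n * (-r j - 1) := by
  have hinv (i : Fin n) : f.symm (((w i : ℕ) : ℤ) + 1) = (i : ℕ) + 1 - n * r i :=
    f.symm_apply_of_apply_eq_add_mul h1 (hwindow i)
  have hsup : (Icc (1 : ℤ) n).sup' (nonempty_Icc.mpr (by exact_mod_cast hn)) f.symm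
      = (j : ℕ) + 1 - n * r j := by
    apply le_antisymm
    · refine sup'_le _ _ fun m hm => ?_
      obtain ⟨i, rfl⟩ := (mem_Icc_iff_exists_perm_apply_add_one w).1 hm
      rw [hinv]
      linarith [val_sub_mul_le_of_isLastMin hjmin hjmax i]
    · rw [← hinv]
      exact le_sup' _ ((mem_Icc_iff_exists_perm_apply_add_one w).2 ⟨j, rfl⟩)
  rw [hsup]
  ring
end

section
/- For any affine permutation w̃ of size n and any integer k ≥ 0, the number of affine transpositions ((i,j)) with 1 ≤ i ≤ n, i < j, and ⌊(w̃(j) − w̃(i))/n⌋ = k equals the corresponding number for w̃⁻¹. In particular, w̃ and w̃⁻¹ have the same inversion partition. -/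
/-!
The pair `(i, j)` with `i < j` and `⌊(w(j) - w(i))/n⌋ = k` is sent to `(w(j), w(i) + m n)`, where
`m` is the unique shift making `⌊(w⁻¹(w(i) + m n) - w⁻¹(w(j)))/n⌋ = (i - j + m n)/n` equal to `k`;
this is again a pair in increasing order, hence a level-`k` inversion of `w⁻¹`. Doing the same
for `w⁻¹` returns `(i, j)` translated by `(m n, m n)`, so after translating the first coordinate
back into `[1, n]` the two constructions are mutually inverse bijections.
-/

namespace AffinePerm

lemma map_add_int_mul {g : ℤ → ℤ} {n : ℤ} (hg : Function.Commute g (· + n)) (x c : ℤ) :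
    g (x + c * n) = g x + c * n := by
  have hper : Function.Periodic (fun x => g x - x) n := fun x => by
    have : g (x + n) = g x + n := hg x
    show g (x + n) - (x + n) = g x - x
    rw [this]; ring
  have : g (x + c * n) - (x + c * n) = g x - x := hper.int_mul c x
  linarith

def diagShift (n c : ℤ) (p : ℤ × ℤ) : ℤ × ℤ := (p.1 + c * n, p.2 + c * n)

lemma diagShift_diagShift (n c d : ℤ) (p : ℤ × ℤ) :
    diagShift n c (diagShift n d p) = diagShift n (d + c) p := by
  ext <;> simp only [diagShift] <;> ring

/-- The translate of `p` along the diagonal whose first coordinate lies in `[1, n]`. -/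
def diagReduce (n : ℤ) (p : ℤ × ℤ) : ℤ × ℤ := diagShift n (-((p.1 - 1) / n)) p

lemma diagReduce_diagShift {n : ℤ} (hn : n ≠ 0) (c : ℤ) (p : ℤ × ℤ) :
    diagReduce n (diagShift n c p) = diagReduce n p := by
  have hq : (p.1 + c * n - 1) / n = (p.1 - 1) / n + c := by
    rw [← Int.add_mul_ediv_right _ _ hn]; ring_nf
  ext <;> simp only [diagReduce, diagShift, hq] <;> ring

lemma diagReduce_eq_self {n : ℤ} {p : ℤ × ℤ} (h1 : 1 ≤ p.1) (h2 : p.1 ≤ n) :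
    diagReduce n p = p := by
  have hq : (p.1 - 1) / n = 0 := Int.ediv_eq_zero_of_lt (by omega) (by omega)
  ext <;> simp [diagReduce, diagShift, hq]

lemma diagReduce_fst_mem {n : ℤ} (hn : 0 < n) (p : ℤ × ℤ) :
    1 ≤ (diagReduce n p).1 ∧ (diagReduce n p).1 ≤ n := by
  have hmod : (diagReduce n p).1 = (p.1 - 1) % n + 1 := by
    rw [Int.emod_def]; simp only [diagReduce, diagShift]; ring
  have := Int.emod_nonneg (p.1 - 1) hn.ne'
  have := Int.emod_lt_of_pos (p.1 - 1) hn
  omega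

def IsLevelInversion (g : ℤ → ℤ) (n k : ℤ) (p : ℤ × ℤ) : Prop :=
  p.1 < p.2 ∧ (g p.2 - g p.1) / n = k

/-- The standard representatives of the affine transpositions `((i, j))` at level `k` for `g`. -/
def levelInversions (g : ℤ → ℤ) (n k : ℤ) : Set (ℤ × ℤ) :=
  {p | 1 ≤ p.1 ∧ p.1 ≤ n ∧ IsLevelInversion g n k p}

lemma isLevelInversion_diagShift {g : ℤ → ℤ} {n : ℤ} (hg : Function.Commute g (· + n))
    (k c : ℤ) (p : ℤ × ℤ) :
    IsLevelInversion g n k (diagShift n c p) ↔ IsLevelInversion g n k p := by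
  simp only [IsLevelInversion, diagShift, map_add_int_mul hg, add_lt_add_iff_right,
    add_sub_add_right_eq_sub]

def swapInv (g : ℤ → ℤ) (n k : ℤ) (p : ℤ × ℤ) : ℤ × ℤ :=
  (g p.2, g p.1 + (k - (p.1 - p.2) / n) * n)

lemma swapInv_diagShift {g : ℤ → ℤ} {n : ℤ} (hg : Function.Commute g (· + n)) (k c : ℤ)
    (p : ℤ × ℤ) : swapInv g n k (diagShift n c p) = diagShift n c (swapInv g n k p) := by
  simp only [swapInv, diagShift, map_add_int_mul hg, add_sub_add_right_eq_sub, Prod.mk.injEq,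
    true_and]
  ring

section Inverse

variable {g h : ℤ → ℤ} {n : ℤ} (hh : Function.Commute h (· + n)) (hhg : Function.LeftInverse h g)
include hh hhg

lemma isLevelInversion_swapInv (hn : 0 < n) {k : ℤ} {p : ℤ × ℤ}
    (hp : IsLevelInversion g n k p) : IsLevelInversion h n k (swapInv g n k p) := by
  obtain ⟨hlt, hlev⟩ := hp
  unfold swapInv
  set m := k - (p.1 - p.2) / n
  have hback : h (g p.1 + m * n) = p.1 + m * n := by rw [map_add_int_mul hh, hhg]
  refine ⟨?_, ?_⟩
  · -- `g p.2 - g p.1 < (k + 1) n ≤ m n`, since `⌊(p.1 - p.2)/n⌋ ≤ -1`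
    have hgap : g p.2 - g p.1 < (k + 1) * n := hlev ▸ Int.lt_ediv_add_one_mul_self _ hn
    have hm : k + 1 ≤ m := by have := Int.ediv_neg_of_neg_of_pos (sub_neg.2 hlt) hn; omega
    have := mul_le_mul_of_nonneg_right hm hn.le
    linarith
  · rw [hback, hhg, show p.1 + m * n - p.2 = p.1 - p.2 + m * n by ring,
      Int.add_mul_ediv_right _ _ hn.ne']
    ring

lemma swapInv_swapInv (hn : n ≠ 0) {k : ℤ} {p : ℤ × ℤ} (hlev : (g p.2 - g p.1) / n = k) :
    swapInv h n k (swapInv g n k p) = diagShift n (k - (p.1 - p.2) / n) p := by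
  unfold swapInv
  set m := k - (p.1 - p.2) / n
  have hq : (g p.2 - (g p.1 + m * n)) / n = k - m := by
    rw [show g p.2 - (g p.1 + m * n) = g p.2 - g p.1 + (-m) * n by ring,
      Int.add_mul_ediv_right _ _ hn, hlev]
    ring
  simp only [diagShift, map_add_int_mul hh, hhg p.1, hhg p.2, hq, Prod.mk.injEq, true_and]
  ring

lemma diagReduce_swapInv_mem {k : ℤ} {p : ℤ × ℤ} (hp : p ∈ levelInversions g n k) :
    diagReduce n (swapInv g n k p) ∈ levelInversions h n k := by
  obtain ⟨h1, h2, hinv⟩ := hp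
  have hn : 0 < n := by omega
  exact ⟨(diagReduce_fst_mem hn _).1, (diagReduce_fst_mem hn _).2,
    (isLevelInversion_diagShift hh k _ _).2 (isLevelInversion_swapInv hh hhg hn hinv)⟩

lemma diagReduce_swapInv_diagReduce_swapInv {k : ℤ} {p : ℤ × ℤ} (hp : p ∈ levelInversions g n k) :
    diagReduce n (swapInv h n k (diagReduce n (swapInv g n k p))) = p := by
  obtain ⟨h1, h2, -, hlev⟩ := hp
  have hn : n ≠ 0 := by omega
  obtain ⟨c, hc⟩ : ∃ c, diagReduce n (swapInv g n k p) = diagShift n c (swapInv g n k p) :=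
    ⟨_, rfl⟩
  rw [hc, swapInv_diagShift hh, swapInv_swapInv hh hhg hn hlev, diagShift_diagShift,
    diagReduce_diagShift hn, diagReduce_eq_self h1 h2]

end Inverse

lemma card_levelInversions_eq {g h : ℤ → ℤ} {n : ℤ} (hg : Function.Commute g (· + n))
    (hh : Function.Commute h (· + n)) (hhg : Function.LeftInverse h g)
    (hgh : Function.LeftInverse g h) (k : ℤ) :
    Nat.card (levelInversions g n k) = Nat.card (levelInversions h n k) :=
  Nat.card_congr
    { toFun := fun p => ⟨_, diagReduce_swapInv_mem hh hhg p.2⟩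
      invFun := fun q => ⟨_, diagReduce_swapInv_mem hg hgh q.2⟩
      left_inv := fun p => Subtype.ext (diagReduce_swapInv_diagReduce_swapInv hh hhg p.2)
      right_inv := fun q => Subtype.ext (diagReduce_swapInv_diagReduce_swapInv hg hgh q.2) }

end AffinePerm

theorem inversion_partition_symm_general (n : ℕ) (f : Equiv.Perm ℤ)
    (h1 : ∀ k : ℤ, f (k + n) = f k + n)
    (k : ℕ) :
    Nat.card {p : ℤ × ℤ // 1 ≤ p.1 ∧ p.1 ≤ n ∧ p.1 < p.2 ∧
        Int.fdiv (f p.2 - f p.1) (n : ℤ) = (k : ℤ)}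
      = Nat.card {p : ℤ × ℤ // 1 ≤ p.1 ∧ p.1 ≤ n ∧ p.1 < p.2 ∧
          Int.fdiv (f.symm p.2 - f.symm p.1) (n : ℤ) = (k : ℤ)} := by
  have hf : Function.Commute f (· + (n : ℤ)) := h1
  have hfd (x : ℤ) : Int.fdiv x n = x / n := Int.fdiv_eq_ediv_of_nonneg x n.cast_nonneg
  simp only [hfd]
  exact AffinePerm.card_levelInversions_eq hf (hf.inverse_left f.left_inv f.right_inv)
    f.left_inv f.right_inv k

/-- An affine permutation and its inverse have the same inversion partition: for each
`k ≥ 0`, the number of affine transpositions `((i,j))` with `1 ≤ i ≤ n`, `i < j` and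
`⌊(w̃(j) − w̃(i))/n⌋ = k` is the same for `w̃` and `w̃⁻¹`. -/
theorem inversion_partition_symm (n : ℕ) (hn : 1 ≤ n) (f : Equiv.Perm ℤ)
    (h1 : ∀ k : ℤ, f (k + n) = f k + n)
    (h2 : ∑ i ∈ Finset.Icc (1 : ℤ) (n : ℤ), f i = n * (n + 1) / 2)
    (k : ℕ) :
    Nat.card {p : ℤ × ℤ // 1 ≤ p.1 ∧ p.1 ≤ n ∧ p.1 < p.2 ∧
        Int.fdiv (f p.2 - f p.1) (n : ℤ) = (k : ℤ)}
      = Nat.card {p : ℤ × ℤ // 1 ≤ p.1 ∧ p.1 ≤ n ∧ p.1 < p.2 ∧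
          Int.fdiv (f.symm p.2 - f.symm p.1) (n : ℤ) = (k : ℤ)} :=
  inversion_partition_symm_general n f h1 k
end

section
/- For any affine permutation w̃ of size n, shi(w̃) = shi(w̃⁻¹), where shi(ṽ) is the number of affine transpositions ((i,j)) with 1 ≤ i ≤ n and i < j < n+i such that ṽ(i) > ṽ(j). -/
/-!
The inversions `(i, j)` (`i < j`, `f j < f i`) of an affine permutation `f` of period `N` fall into
orbits under `(i, j) ↦ (i + N, j + N)`, represented by those with `1 ≤ i ≤ N`; there are finitely
many. Since `j = i + N` is never an inversion, `shi f` is the number of all of them minus the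
*long* ones (`j - i > N`). Replacing `j` by `j - N` matches long inversions with *steep* ones
(`f i - f j > N`), while `(i, j) ↦ (f j, f i)`, translated back into the window, matches the
inversions of `f` with those of `f⁻¹` and the steep ones of `f` with the long ones of `f⁻¹`. So
`shi f = #inv f - #long f = #inv f - #steep f = #inv f⁻¹ - #long f⁻¹ = shi f⁻¹`.
-/

namespace AffinePerm

variable {f : Equiv.Perm ℤ} {N : ℤ}

theorem periodic_apply_sub (hf : ∀ k, f (k + N) = f k + N) :
    Function.Periodic (fun k => f k - k) N := fun k => by
  simp only [hf]
  ring

theorem apply_add_mul (hf : ∀ k, f (k + N) = f k + N) (k m : ℤ) :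
    f (k + m * N) = f k + m * N := by
  have := (periodic_apply_sub hf).int_mul m k
  rw [Int.cast_id] at this
  linarith

theorem symm_apply_add (hf : ∀ k, f (k + N) = f k + N) (k : ℤ) :
    f.symm (k + N) = f.symm k + N :=
  f.injective (by rw [hf, Equiv.apply_symm_apply, Equiv.apply_symm_apply])

theorem symm_apply_sub_mul (hf : ∀ k, f (k + N) = f k + N) (k m : ℤ) :
    f.symm (f k - m * N) = k - m * N := by
  simpa [sub_eq_add_neg] using apply_add_mul (symm_apply_add hf) (f k) (-m)

theorem exists_abs_apply_sub_le (hf : ∀ k, f (k + N) = f k + N) (hN : 0 < N) :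
    ∃ C, ∀ k, |f k - k| ≤ C := by
  obtain ⟨C, hC⟩ := ((Set.finite_Ico 0 N).image fun k => |f k - k|).bddAbove
  refine ⟨C, fun k => ?_⟩
  obtain ⟨y, hy, hky⟩ := (periodic_apply_sub hf).exists_mem_Ico₀ hN k
  rw [hky]
  exact hC ⟨y, hy, rfl⟩

theorem sub_toIcoDiv_mul_mem_Ico (hN : 0 < N) (a b : ℤ) :
    b - toIcoDiv hN a b * N ∈ Set.Ico a (a + N) := by
  simpa only [smul_eq_mul] using sub_toIcoDiv_zsmul_mem_Ico hN a b

theorem toIcoDiv_sub_mul (hN : 0 < N) (a b m : ℤ) :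
    toIcoDiv hN a (b - m * N) = toIcoDiv hN a b - m := by
  rw [← smul_eq_mul, toIcoDiv_sub_zsmul]

def inversions (f : Equiv.Perm ℤ) (N : ℤ) : Set (ℤ × ℤ) :=
  {p | 1 ≤ p.1 ∧ p.1 ≤ N ∧ p.1 < p.2 ∧ f p.2 < f p.1}

def longInversions (f : Equiv.Perm ℤ) (N : ℤ) : Set (ℤ × ℤ) :=
  {p | p ∈ inversions f N ∧ N + p.1 < p.2}

def steepInversions (f : Equiv.Perm ℤ) (N : ℤ) : Set (ℤ × ℤ) :=
  {p | p ∈ inversions f N ∧ N + f p.2 < f p.1}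

noncomputable def shi (f : Equiv.Perm ℤ) (N : ℤ) : ℕ :=
  Nat.card {p : ℤ × ℤ // 1 ≤ p.1 ∧ p.1 ≤ N ∧ p.1 < p.2 ∧ p.2 < N + p.1 ∧ f p.2 < f p.1}

theorem inversions_finite (hf : ∀ k, f (k + N) = f k + N) (hN : 0 < N) :
    (inversions f N).Finite := by
  obtain ⟨C, hC⟩ := exists_abs_apply_sub_le hf hN
  refine ((Set.finite_Icc 1 N).prod (Set.finite_Icc 1 (N + 2 * C))).subset ?_
  rintro ⟨i, j⟩ ⟨hi1, hiN, hij, hfji : f j < f i⟩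
  have := abs_le.mp (hC i)
  have := abs_le.mp (hC j)
  exact ⟨⟨hi1, hiN⟩, by omega, by omega⟩

theorem shi_eq_ncard_sub (hf : ∀ k, f (k + N) = f k + N) (hN : 0 < N) :
    shi f N = (inversions f N).ncard - (longInversions f N).ncard := by
  have hshort : {p : ℤ × ℤ | 1 ≤ p.1 ∧ p.1 ≤ N ∧ p.1 < p.2 ∧ p.2 < N + p.1 ∧ f p.2 < f p.1} =
      inversions f N \ longInversions f N := by
    ext ⟨i, j⟩
    have hfi := hf i
    simp only [longInversions, inversions, Set.mem_sdiff, Set.mem_ofPred_eq]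
    constructor
    · rintro ⟨hi1, hiN, hij, hjN, hfji⟩
      exact ⟨⟨hi1, hiN, hij, hfji⟩, fun h => by omega⟩
    · rintro ⟨⟨hi1, hiN, hij, hfji⟩, hnotLong⟩
      have hj : j ≠ i + N := by rintro rfl; omega
      exact ⟨hi1, hiN, hij, by omega, hfji⟩
  rw [← Set.ncard_sdiff (fun p hp => hp.1) ((inversions_finite hf hN).subset fun p hp => hp.1),
    ← hshort]
  exact Nat.card_coe_set_eq _

theorem ncard_longInversions (hf : ∀ k, f (k + N) = f k + N) :
    (longInversions f N).ncard = (steepInversions f N).ncard := by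
  let shift : ℤ × ℤ ≃ ℤ × ℤ := (Equiv.refl ℤ).prodCongr (Equiv.addRight N)
  have hpre : shift ⁻¹' longInversions f N = steepInversions f N := by
    ext ⟨i, j⟩
    simp only [shift, longInversions, steepInversions, inversions, Set.mem_preimage,
      Set.mem_ofPred_eq, Equiv.prodCongr_apply, Prod.map, Equiv.refl_apply,
      Equiv.coe_addRight, hf]
    omega
  rw [← hpre, Set.ncard_preimage_of_injective_subset_range shift.injective
    (by simp [shift.surjective.range_eq])]

noncomputable def dualInversion (f : Equiv.Perm ℤ) (hN : 0 < N) (p : ℤ × ℤ) : ℤ × ℤ :=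
  (f p.2 - toIcoDiv hN 1 (f p.2) * N, f p.1 - toIcoDiv hN 1 (f p.2) * N)

theorem dualInversion_mem_inversions (hf : ∀ k, f (k + N) = f k + N) (hN : 0 < N)
    {p : ℤ × ℤ} (hp : p ∈ inversions f N) : dualInversion f hN p ∈ inversions f.symm N := by
  obtain ⟨-, -, hij, hfji⟩ := hp
  have hwin := sub_toIcoDiv_mul_mem_Ico hN 1 (f p.2)
  simp only [dualInversion, inversions, Set.mem_ofPred_eq, symm_apply_sub_mul hf,
    Set.mem_Ico] at hwin ⊢
  omega

theorem dualInversion_symm_dualInversion (hf : ∀ k, f (k + N) = f k + N) (hN : 0 < N)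
    {p : ℤ × ℤ} (hp : p ∈ inversions f N) : dualInversion f.symm hN (dualInversion f hN p) = p := by
  obtain ⟨hi1, hiN, -, -⟩ := hp
  have hwin : toIcoDiv hN 1 p.1 = 0 :=
    (toIcoDiv_eq_iff hN).mpr (by simp only [zero_smul, sub_zero, Set.mem_Ico]; omega)
  simp only [dualInversion, symm_apply_sub_mul hf, toIcoDiv_sub_mul, hwin]
  ext <;> ring

theorem bijOn_dualInversion (hf : ∀ k, f (k + N) = f k + N) (hN : 0 < N) :
    Set.BijOn (dualInversion f hN) (inversions f N) (inversions f.symm N) := by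
  have hf' := symm_apply_add hf
  refine Set.InvOn.bijOn (f' := dualInversion f.symm hN)
    ⟨fun p hp => dualInversion_symm_dualInversion hf hN hp, fun q hq => ?_⟩
    (fun p hp => dualInversion_mem_inversions hf hN hp) (fun q hq => ?_)
  · simpa only [Equiv.symm_symm] using dualInversion_symm_dualInversion hf' hN hq
  · simpa only [Equiv.symm_symm] using dualInversion_mem_inversions hf' hN hq

theorem dualInversion_mem_longInversions_iff (hf : ∀ k, f (k + N) = f k + N) (hN : 0 < N)
    {p : ℤ × ℤ} (hp : p ∈ inversions f N) :
    dualInversion f hN p ∈ longInversions f.symm N ↔ p ∈ steepInversions f N := by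
  have hdual := dualInversion_mem_inversions hf hN hp
  simp only [longInversions, steepInversions, Set.mem_ofPred_eq, hdual, hp, true_and]
  simp only [dualInversion]
  omega

theorem ncard_steepInversions (hf : ∀ k, f (k + N) = f k + N) (hN : 0 < N) :
    (steepInversions f N).ncard = (longInversions f.symm N).ncard := by
  have hbij := bijOn_dualInversion hf hN
  refine Set.BijOn.ncard_eq ⟨fun p hp => (dualInversion_mem_longInversions_iff hf hN hp.1).mpr hp,
    hbij.injOn.mono fun p hp => hp.1, fun q hq => ?_⟩
  obtain ⟨p, hp, rfl⟩ := hbij.surjOn hq.1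
  exact ⟨p, (dualInversion_mem_longInversions_iff hf hN hp).mp hq, rfl⟩

theorem shi_symm (hf : ∀ k, f (k + N) = f k + N) (hN : 0 < N) : shi f N = shi f.symm N := by
  have hf' := symm_apply_add hf
  rw [shi_eq_ncard_sub hf hN, shi_eq_ncard_sub hf' hN, ncard_longInversions hf,
    ncard_steepInversions hf hN, (bijOn_dualInversion hf hN).ncard_eq]

end AffinePerm

theorem shi_inverse_general (n : ℕ) (hn : 1 ≤ n) (f : Equiv.Perm ℤ)
    (h1 : ∀ k : ℤ, f (k + n) = f k + n) :
    Nat.card {p : ℤ × ℤ // 1 ≤ p.1 ∧ p.1 ≤ n ∧ p.1 < p.2 ∧ p.2 < n + p.1 ∧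
        f p.2 < f p.1}
      = Nat.card {p : ℤ × ℤ // 1 ≤ p.1 ∧ p.1 ≤ n ∧ p.1 < p.2 ∧ p.2 < n + p.1 ∧
          f.symm p.2 < f.symm p.1} :=
  AffinePerm.shi_symm h1 (by omega)

/-- `shi(w̃) = shi(w̃⁻¹)`: the number of affine transpositions `((i,j))` with `1 ≤ i ≤ n`,
`i < j < n + i` and `w̃(i) > w̃(j)` is the same for an affine permutation and its inverse. -/
theorem shi_inverse (n : ℕ) (hn : 1 ≤ n) (f : Equiv.Perm ℤ)
    (h1 : ∀ k : ℤ, f (k + n) = f k + n)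
    (h2 : ∑ i ∈ Finset.Icc (1 : ℤ) (n : ℤ), f i = n * (n + 1) / 2) :
    Nat.card {p : ℤ × ℤ // 1 ≤ p.1 ∧ p.1 ≤ n ∧ p.1 < p.2 ∧ p.2 < n + p.1 ∧
        f p.2 < f p.1}
      = Nat.card {p : ℤ × ℤ // 1 ≤ p.1 ∧ p.1 ≤ n ∧ p.1 < p.2 ∧ p.2 < n + p.1 ∧
          f.symm p.2 < f.symm p.1} :=
  shi_inverse_general n hn f h1
end

section
/- Let I ⊆ Φ⁺ be an upper order ideal of positive roots of type A_{n-1}, and define k_I(α) to be the maximum r such that α can be written as a sum of r elements of I (and 0 if no such expression exists). Then for all triples α, β, α+β of positive roots, k_I(α) + k_I(β) ≤ k_I(α+β) ≤ k_I(α) + k_I(β) + 1. -/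
/-- The vector `e_i − e_j ∈ ℤ^n` associated to the pair `p = (i,j)`. -/
def rootVec (n : ℕ) (p : Fin n × Fin n) : Fin n → ℤ :=
  fun k => (if k = p.1 then 1 else 0) - (if k = p.2 then 1 else 0)

/-- `I` is an upper order ideal in the root poset of type `A_{n-1}`. -/
def IsUpperIdeal (n : ℕ) (I : Set (Fin n × Fin n)) : Prop :=
  (∀ p ∈ I, p.1 < p.2) ∧
  ∀ p q : Fin n × Fin n, p ∈ I → q.1 ≤ p.1 → p.2 ≤ q.2 → q ∈ I

/-- `kIdeal n I α` is the maximum `r` such that the root `α` is a sum of `r` roots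
belonging to `I` (and `0` if there is no such expression). -/
noncomputable def kIdeal (n : ℕ) (I : Set (Fin n × Fin n)) (α : Fin n × Fin n) : ℕ :=
  sSup {r : ℕ | ∃ c : Fin r → Fin n × Fin n,
    (∀ t, c t ∈ I) ∧ ∑ t, rootVec n (c t) = rootVec n α}

namespace KAux

variable {n : ℕ} {I : Set (Fin n × Fin n)}

def kSet (n : ℕ) (I : Set (Fin n × Fin n)) (α : Fin n × Fin n) : Set ℕ :=
  {r : ℕ | ∃ c : Fin r → Fin n × Fin n,
    (∀ t, c t ∈ I) ∧ ∑ t, rootVec n (c t) = rootVec n α}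

def wt (n : ℕ) (v : Fin n → ℤ) : ℤ := ∑ k : Fin n, ((k : ℕ) : ℤ) * v k

lemma wt_rootVec (p : Fin n × Fin n) : wt n (rootVec n p) = (p.1 : ℤ) - (p.2 : ℤ) := by
  simp [wt, rootVec, mul_sub, Finset.sum_sub_distrib, mul_ite, mul_one, mul_zero,
    Finset.sum_ite_eq']

lemma wt_sum {m : ℕ} (f : Fin m → Fin n → ℤ) : wt n (∑ t, f t) = ∑ t, wt n (f t) := by
  simp only [wt, Finset.sum_apply, Finset.mul_sum]
  exact Finset.sum_comm

lemma rootVec_trans (i m j : Fin n) :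
    rootVec n (i, m) + rootVec n (m, j) = rootVec n (i, j) := by
  funext k; simp only [rootVec, Pi.add_apply]; ring

lemma rootVec_self (i : Fin n) : rootVec n (i, i) = 0 := by
  funext k; simp [rootVec]

lemma wt_le (hI1 : ∀ p ∈ I, p.1 < p.2) {m : ℕ} (c : Fin m → Fin n × Fin n)
    (hc : ∀ t, c t ∈ I) : wt n (∑ t, rootVec n (c t)) ≤ -(m : ℤ) := by
  rw [wt_sum]
  calc ∑ t, wt n (rootVec n (c t)) ≤ ∑ _t : Fin m, (-1 : ℤ) := by
        refine Finset.sum_le_sum fun t _ => ?_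
        rw [wt_rootVec]
        have h := hI1 _ (hc t)
        have : ((c t).1 : ℤ) < ((c t).2 : ℤ) := by exact_mod_cast h
        omega
    _ = -(m : ℤ) := by simp

lemma rootVec_inj {p : Fin n × Fin n} {i j : Fin n} (hp : p.1 ≠ p.2) (hij : i ≠ j)
    (h : rootVec n p = rootVec n (i, j)) : p = (i, j) := by
  have h1 := congrFun h i
  have h2 := congrFun h j
  simp only [rootVec] at h1 h2
  simp only [if_pos trivial, if_neg hij, if_neg (Ne.symm hij)] at h1 h2
  have hpi : p.1 = i := by split_ifs at h1 <;> omega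
  have hpj : p.2 = j := by split_ifs at h2 <;> omega
  exact Prod.ext hpi hpj



lemma chain_sum : ∀ (r : ℕ) (d : Fin (r + 1) → Fin n),
    ∑ t : Fin r, rootVec n (d t.castSucc, d t.succ) = rootVec n (d 0, d (Fin.last r)) := by
  intro r
  induction r with
  | zero =>
      intro d
      simp only [Finset.univ_eq_empty, Finset.sum_empty, Fin.last]
      rw [show (⟨0, by omega⟩ : Fin 1) = 0 from rfl, rootVec_self]
  | succ r ih =>
      intro d
      rw [Fin.sum_univ_castSucc]
      have h1 : ∀ t : Fin r, (d t.castSucc.castSucc, d t.castSucc.succ)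
          = ((d ∘ Fin.castSucc) t.castSucc, (d ∘ Fin.castSucc) t.succ) := by
        intro t
        simp only [Function.comp]
        rw [Fin.succ_castSucc]
      calc (∑ t : Fin r, rootVec n (d t.castSucc.castSucc, d t.castSucc.succ))
            + rootVec n (d (Fin.last r).castSucc, d (Fin.last r).succ)
          = (∑ t : Fin r, rootVec n ((d ∘ Fin.castSucc) t.castSucc, (d ∘ Fin.castSucc) t.succ))
            + rootVec n (d (Fin.last r).castSucc, d (Fin.last r).succ) := rfl
        _ = rootVec n ((d ∘ Fin.castSucc) 0, (d ∘ Fin.castSucc) (Fin.last r))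
            + rootVec n (d (Fin.last r).castSucc, d (Fin.last r).succ) := by rw [ih]
        _ = rootVec n (d 0, d (Fin.last (r + 1))) := by
            have h2 := rootVec_trans (d 0) (d (Fin.last r).castSucc) (d (Fin.last (r + 1)))
            simpa [Function.comp, Fin.castSucc_zero, Fin.succ_last] using h2

lemma chain_mem (d : Fin (r + 1) → Fin n)
    (hd : ∀ t : Fin r, (d t.castSucc, d t.succ) ∈ I) :
    r ∈ kSet n I (d 0, d (Fin.last r)) :=
  ⟨fun t => (d t.castSucc, d t.succ), hd, chain_sum r d⟩



lemma exists_chain (hI1 : ∀ p ∈ I, p.1 < p.2) :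
    ∀ (r : ℕ) (c : Fin r → Fin n × Fin n), (∀ t, c t ∈ I) →
    ∀ i j : Fin n, i ≠ j → (∑ t, rootVec n (c t)) = rootVec n (i, j) →
    ∃ d : Fin (r + 1) → Fin n, d 0 = i ∧ d (Fin.last r) = j ∧
      ∀ t : Fin r, (d t.castSucc, d t.succ) ∈ I := by
  intro r
  induction r with
  | zero =>
      intro c hc i j hij hs
      exfalso
      have h := congrFun hs i
      simp [rootVec, hij] at h
  | succ m ih =>
      intro c hc i j hij hs
      -- find t0 with (c t0).1 = i
      have hex : ∃ t0, (c t0).1 = i := by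
        by_contra hne
        push_neg at hne
        have h := congrFun hs i
        simp only [Finset.sum_apply] at h
        have hle : ∑ t, rootVec n (c t) i ≤ 0 := by
          refine Finset.sum_nonpos fun t _ => ?_
          simp only [rootVec]
          rw [if_neg fun e => hne t e.symm]
          split <;> omega
        rw [h] at hle
        simp only [rootVec, if_pos trivial, if_neg hij] at hle
        omega
      obtain ⟨t0, ht0⟩ := hex
      set mid := (c t0).2 with hmid
      have hct0 : c t0 = (i, mid) := Prod.ext ht0 rfl
      -- the remaining roots
      set c' : Fin m → Fin n × Fin n := fun s => c (Equiv.swap (0 : Fin (m + 1)) t0 s.succ)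
        with hc'
      have hc'mem : ∀ s, c' s ∈ I := fun s => hc _
      have hsum' : ∑ s, rootVec n (c' s) = rootVec n (mid, j) := by
        have hperm : ∑ t : Fin (m + 1), rootVec n (c (Equiv.swap (0 : Fin (m + 1)) t0 t))
            = ∑ t, rootVec n (c t) :=
          Equiv.sum_comp (Equiv.swap (0 : Fin (m + 1)) t0) (fun t => rootVec n (c t))
        rw [Fin.sum_univ_succ, Equiv.swap_apply_left, hs, hct0] at hperm
        have := rootVec_trans i mid j
        have h2 : rootVec n (i, mid) + ∑ s, rootVec n (c' s)
            = rootVec n (i, mid) + rootVec n (mid, j) := by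
          rw [hperm, ← rootVec_trans i mid j]
        exact add_left_cancel h2
      by_cases hmj : mid = j
      · -- remaining sum is zero, so m = 0
        have hm0 : m = 0 := by
          have hw := wt_le hI1 c' hc'mem
          rw [hsum', hmj, rootVec_self] at hw
          simp only [wt, mul_zero, Pi.zero_apply, Finset.sum_const_zero] at hw
          omega
        subst hm0
        refine ⟨![i, j], rfl, rfl, ?_⟩
        intro t
        fin_cases t
        have h3 : c t0 = (i, j) := by rw [hct0, hmj]
        show (i, j) ∈ I
        exact h3 ▸ hc t0
      · obtain ⟨d', hd'0, hd'l, hd's⟩ := ih c' hc'mem mid j hmj hsum'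
        refine ⟨Fin.cons i d', Fin.cons_zero _ _, ?_, ?_⟩
        · rw [show Fin.last (m + 1) = (Fin.last m).succ from rfl, Fin.cons_succ, hd'l]
        · intro t
          refine Fin.cases ?_ ?_ t
          · simp only [Fin.castSucc_zero, Fin.cons_zero, Fin.cons_succ, hd'0]
            exact hct0 ▸ hc t0
          · intro s
            simp only [← Fin.succ_castSucc, Fin.cons_succ]
            exact hd's s



lemma kSet_bdd (hI1 : ∀ p ∈ I, p.1 < p.2) (α : Fin n × Fin n) : BddAbove (kSet n I α) := by
  refine ⟨n, fun r hr => ?_⟩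
  obtain ⟨c, hc, hsum⟩ := hr
  have h1 := wt_le hI1 c hc
  rw [hsum, wt_rootVec] at h1
  have h2 : ((α.2 : ℕ) : ℤ) < (n : ℤ) := by exact_mod_cast α.2.isLt
  have h3 : (0 : ℤ) ≤ ((α.1 : ℕ) : ℤ) := by positivity
  omega

lemma le_kIdeal (hI1 : ∀ p ∈ I, p.1 < p.2) {α : Fin n × Fin n} {r : ℕ}
    (h : r ∈ kSet n I α) : r ≤ kIdeal n I α :=
  le_csSup (kSet_bdd hI1 α) h

lemma kIdeal_mem (hI1 : ∀ p ∈ I, p.1 < p.2) {α : Fin n × Fin n}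
    (h : kIdeal n I α ≠ 0) : kIdeal n I α ∈ kSet n I α := by
  have hne : (kSet n I α).Nonempty := by
    by_contra hne
    rw [Set.not_nonempty_iff_eq_empty] at hne
    apply h
    show sSup (kSet n I α) = 0
    rw [hne, csSup_empty]
    rfl
  exact Nat.sSup_mem hne (kSet_bdd hI1 α)



lemma core_lower (hI : IsUpperIdeal n I) {i j k : Fin n} (hij : i < j) (hjk : j < k) :
    kIdeal n I (i, j) + kIdeal n I (j, k) ≤ kIdeal n I (i, k) := by
  obtain ⟨hI1, hI2⟩ := hI
  set a := kIdeal n I (i, j) with ha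
  set b := kIdeal n I (j, k) with hb
  rcases Nat.eq_zero_or_pos a with ha0 | hapos
  · rcases Nat.eq_zero_or_pos b with hb0 | hbpos
    · simp [ha0, hb0]
    · -- a = 0 : widen the first step of a chain for (j,k)
      obtain ⟨c2, hc2, hs2⟩ := kIdeal_mem hI1 (α := (j, k)) (by omega)
      obtain ⟨d, hd0, hdl, hds⟩ := exists_chain hI1 b c2 hc2 j k (ne_of_lt hjk) hs2
      set d' : Fin (b + 1) → Fin n := fun s => if s.val = 0 then i else d s with hd'
      have hmem2 := chain_mem (I := I) d' (fun t => ?_)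
      · have e0 : d' 0 = i := by simp [hd']
        have el : d' (Fin.last b) = k := by
          rw [hd']
          simp only [Fin.val_last]
          rw [if_neg (by omega), hdl]
        rw [e0, el] at hmem2
        have := le_kIdeal hI1 hmem2
        omega
      · by_cases ht : t.val = 0
        · have htc : t.castSucc = (0 : Fin (b + 1)) := by
            ext; simpa using ht
          have h1 : d' t.castSucc = i := by rw [htc, hd']; simp
          have h2 : d' t.succ = d t.succ := by
            rw [hd']; simp only [Fin.val_succ]; rw [if_neg (by omega)]
          rw [h1, h2]
          exact hI2 (d t.castSucc, d t.succ) (i, d t.succ) (hds t)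
            (by rw [htc, hd0]; exact le_of_lt hij) (le_refl _)
        · have h1 : d' t.castSucc = d t.castSucc := by
            rw [hd']; simp only [Fin.coe_castSucc]; rw [if_neg ht]
          have h2 : d' t.succ = d t.succ := by
            rw [hd']; simp only [Fin.val_succ]; rw [if_neg (by omega)]
          rw [h1, h2]; exact hds t
  · rcases Nat.eq_zero_or_pos b with hb0 | hbpos
    · -- b = 0 : widen the last step of a chain for (i,j)
      obtain ⟨c1, hc1, hs1⟩ := kIdeal_mem hI1 (α := (i, j)) (by omega)
      obtain ⟨d, hd0, hdl, hds⟩ := exists_chain hI1 a c1 hc1 i j (ne_of_lt hij) hs1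
      set d' : Fin (a + 1) → Fin n := fun s => if s.val = a then k else d s with hd'
      have hmem2 := chain_mem (I := I) d' (fun t => ?_)
      · have e0 : d' 0 = i := by
          rw [hd']
          show (if (0 : Fin (a+1)).val = a then k else d 0) = i
          rw [if_neg (by simp; omega), hd0]
        have el : d' (Fin.last a) = k := by
          rw [hd']; simp
        rw [e0, el] at hmem2
        have := le_kIdeal hI1 hmem2
        omega
      · have h1 : d' t.castSucc = d t.castSucc := by
          rw [hd']; simp only [Fin.coe_castSucc]; rw [if_neg (by omega)]
        by_cases ht : t.val + 1 = a
        · have h2 : d' t.succ = k := by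
            rw [hd']; simp only [Fin.val_succ]; rw [if_pos ht]
          have htl : t.succ = Fin.last a := by ext; simpa using ht
          rw [h1, h2]
          refine hI2 (d t.castSucc, d t.succ) (d t.castSucc, k) (hds t) (le_refl _) ?_
          rw [htl, hdl]; exact le_of_lt hjk
        · have h2 : d' t.succ = d t.succ := by
            rw [hd']; simp only [Fin.val_succ]; rw [if_neg ht]
          rw [h1, h2]; exact hds t
    · -- both positive : append decompositions
      obtain ⟨c1, hc1, hs1⟩ := kIdeal_mem hI1 (α := (i, j)) (by omega)
      obtain ⟨c2, hc2, hs2⟩ := kIdeal_mem hI1 (α := (j, k)) (by omega)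
      have hmem : a + b ∈ kSet n I (i, k) := by
        refine ⟨Fin.append c1 c2, ?_, ?_⟩
        · intro t
          refine Fin.addCases (fun l => ?_) (fun r => ?_) t
          · rw [Fin.append_left]; exact hc1 l
          · rw [Fin.append_right]; exact hc2 r
        · rw [Fin.sum_univ_add]
          simp only [Fin.append_left, Fin.append_right]
          rw [hs1, hs2, rootVec_trans]
      exact le_kIdeal hI1 hmem



lemma chain_mem' (r : ℕ) (d : Fin (r + 1) → Fin n)
    (hd : ∀ t : Fin r, (d t.castSucc, d t.succ) ∈ I) (i j : Fin n)
    (h0 : d 0 = i) (hl : d (Fin.last r) = j) : r ∈ kSet n I (i, j) := by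
  rw [← h0, ← hl]; exact chain_mem d hd

set_option maxHeartbeats 2000000 in
lemma core_upper (hI : IsUpperIdeal n I) {i j k : Fin n} (hij : i < j) (hjk : j < k) :
    kIdeal n I (i, k) ≤ kIdeal n I (i, j) + kIdeal n I (j, k) + 1 := by
  obtain ⟨hI1, hI2⟩ := hI
  set a := kIdeal n I (i, j) with ha
  set b := kIdeal n I (j, k) with hb
  set r := kIdeal n I (i, k) with hr
  rcases Nat.eq_zero_or_pos r with hr0 | hrpos
  · omega
  obtain ⟨c, hc, hs⟩ := kIdeal_mem hI1 (α := (i, k)) (by omega)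
  obtain ⟨d, hd0, hdl, hds⟩ := exists_chain hI1 r c hc i k (ne_of_lt (lt_trans hij hjk)) hs
  have key : ∃ m : ℕ, ∃ hm : m < r, d ⟨m, Nat.lt_succ_of_lt hm⟩ ≤ j
      ∧ j < d ⟨m + 1, Nat.succ_lt_succ hm⟩ := by
    classical
    set T : Finset (Fin (r + 1)) := Finset.univ.filter (fun t => d t ≤ j) with hT
    have hTne : T.Nonempty := ⟨0, by simp [hT, hd0, le_of_lt hij]⟩
    set ts := T.max' hTne with hts
    have htmem : ts ∈ T := T.max'_mem hTne
    have hle : d ts ≤ j := by rw [hT] at htmem; simpa using htmem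
    have htne : ts.val < r := by
      rcases Nat.lt_or_ge ts.val r with h | h
      · exact h
      · exfalso
        have hlast : ts = Fin.last r := by
          ext
          simp only [Fin.val_last]
          have := ts.isLt
          omega
        rw [hlast, hdl] at hle
        exact absurd hle (not_le.mpr hjk)
    refine ⟨ts.val, htne, ?_, ?_⟩
    · have hts' : (⟨ts.val, Nat.lt_succ_of_lt htne⟩ : Fin (r + 1)) = ts := by ext; rfl
      rw [hts']; exact hle
    · rcases lt_or_ge j (d ⟨ts.val + 1, Nat.succ_lt_succ htne⟩) with h | h
      · exact h
      · exfalso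
        have hmem2 : (⟨ts.val + 1, Nat.succ_lt_succ htne⟩ : Fin (r + 1)) ∈ T := by
          rw [hT]; simp [h]
        have hle2 := T.le_max' _ hmem2
        rw [← hts] at hle2
        have : ts.val + 1 ≤ ts.val := hle2
        omega
  obtain ⟨m, hm, hdm, hdm1⟩ := key
  by_cases hdj : d ⟨m, Nat.lt_succ_of_lt hm⟩ = j
  · -- j occurs on the chain : split it
    have hm1 : m ∈ kSet n I (i, j) := by
      refine chain_mem' m (fun s => d ⟨s.val, by have hsl := s.isLt; omega⟩)
        (fun s => ?_) i j ?_ ?_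
      · exact hds ⟨s.val, by have hsl := s.isLt; omega⟩
      · convert hd0 using 2
        all_goals ext
        all_goals simp
      · convert hdj using 2
        all_goals ext
        all_goals simp [Fin.val_last]
    have hm2 : r - m ∈ kSet n I (j, k) := by
      refine chain_mem' (r - m) (fun s => d ⟨m + s.val, by have hsl := s.isLt; omega⟩)
        (fun s => ?_) j k ?_ ?_
      · exact hds ⟨m + s.val, by have hsl := s.isLt; omega⟩
      · convert hdj using 2
        all_goals ext
        all_goals simp
      · convert hdl using 2
        all_goals ext
        all_goals (simp [Fin.val_last]; omega)
    have h1 := le_kIdeal hI1 hm1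
    have h2 := le_kIdeal hI1 hm2
    omega
  · -- j strictly inside a link
    have hua : m = 0 ∨ m ≤ a := by
      rcases Nat.eq_zero_or_pos m with h0 | hpos
      · exact Or.inl h0
      · right
        refine le_kIdeal hI1 ?_
        refine chain_mem' m
          (fun s => if s.val = m then j else d ⟨s.val, by have hsl := s.isLt; omega⟩)
          (fun s => ?_) i j ?_ ?_
        · have e1 : (if (s.castSucc.val) = m then j
              else d ⟨s.castSucc.val, by have hsl := s.castSucc.isLt; omega⟩)
              = d ⟨s.val, by have hsl := s.isLt; omega⟩ := by
            rw [if_neg (by have hsl := s.isLt; simp only [Fin.coe_castSucc]; omega)]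
            congr 1
            all_goals ext
            all_goals simp
          by_cases hsu : s.val + 1 = m
          · have e2 : (if (s.succ.val) = m then j
                else d ⟨s.succ.val, by have hsl := s.succ.isLt; omega⟩) = j := by
              rw [if_pos (by simp only [Fin.val_succ]; omega)]
            have pf1 : s.val < r + 1 := by have hsl := s.isLt; omega
            have pf2 : s.val + 1 < r + 1 := by have hsl := s.isLt; omega
            have pf3 : s.val < r := by have hsl := s.isLt; omega
            have e3 : d ⟨s.val + 1, pf2⟩ = d ⟨m, Nat.lt_succ_of_lt hm⟩ :=
              congrArg d (Fin.ext (by simp [hsu]))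
            have hw : (d ⟨s.val, pf1⟩, j) ∈ I :=
              hI2 (d ⟨s.val, pf1⟩, d ⟨s.val + 1, pf2⟩) (d ⟨s.val, pf1⟩, j)
                (hds ⟨s.val, pf3⟩) (le_refl _) (le_trans (le_of_eq e3) hdm)
            beta_reduce
            rw [e1, e2]
            exact hw
          · have e2 : (if (s.succ.val) = m then j
                else d ⟨s.succ.val, by have hsl := s.succ.isLt; omega⟩)
                = d ⟨s.val + 1, by have hsl := s.isLt; omega⟩ := by
              rw [if_neg (by simp only [Fin.val_succ]; omega)]
              congr 1
              all_goals ext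
              all_goals simp
            beta_reduce
            rw [e1, e2]
            exact hds ⟨s.val, by have hsl := s.isLt; omega⟩
        · beta_reduce
          rw [if_neg (by simp only [Fin.val_zero]; omega)]
          convert hd0 using 2
          all_goals ext
          all_goals simp
        · beta_reduce
          rw [if_pos (by simp only [Fin.val_last])]
    have hlb : r - m - 1 = 0 ∨ r - m - 1 ≤ b := by
      rcases Nat.eq_zero_or_pos (r - m - 1) with h0 | hpos
      · exact Or.inl h0
      · right
        refine le_kIdeal hI1 ?_
        refine chain_mem' (r - m - 1)
          (fun s => if s.val = 0 then j
            else d ⟨m + 1 + s.val, by have hsl := s.isLt; omega⟩)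
          (fun s => ?_) j k ?_ ?_
        · have e2 : (if (s.succ.val) = 0 then j
              else d ⟨m + 1 + s.succ.val, by have hsl := s.succ.isLt; omega⟩)
              = d ⟨m + 1 + s.val + 1, by have hsl := s.isLt; omega⟩ := by
            rw [if_neg (by simp only [Fin.val_succ]; omega)]
            congr 1
            all_goals ext
            all_goals (simp [Fin.val_succ]; omega)
          by_cases hs0 : s.castSucc.val = 0
          · have e1 : (if (s.castSucc.val) = 0 then j
                else d ⟨m + 1 + s.castSucc.val, by have hsl := s.castSucc.isLt; omega⟩)
                = j := by rw [if_pos hs0]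
            have hsv : s.val = 0 := by simpa using hs0
            have pf1 : m + 1 + s.val + 1 < r + 1 := by have hsl := s.isLt; omega
            have pf2 : m + 1 + 1 < r + 1 := by omega
            have pf3 : m + 1 < r + 1 := by omega
            have pf4 : m + 1 < r := by omega
            have e5 : d ⟨m + 1 + s.val + 1, pf1⟩ = d ⟨m + 1 + 1, pf2⟩ :=
              congrArg d (Fin.ext (by simp [hsv]))
            have hw : (j, d ⟨m + 1 + s.val + 1, pf1⟩) ∈ I :=
              hI2 (d ⟨m + 1, pf3⟩, d ⟨m + 1 + 1, pf2⟩) (j, d ⟨m + 1 + s.val + 1, pf1⟩)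
                (hds ⟨m + 1, pf4⟩) (le_of_lt hdm1) (le_of_eq e5.symm)
            beta_reduce
            rw [e1, e2]
            exact hw
          · have e1 : (if (s.castSucc.val) = 0 then j
                else d ⟨m + 1 + s.castSucc.val, by have hsl := s.castSucc.isLt; omega⟩)
                = d ⟨m + 1 + s.val, by have hsl := s.isLt; omega⟩ := by
              rw [if_neg hs0]
              congr 1
              all_goals ext
              all_goals simp
            beta_reduce
            rw [e1, e2]
            exact hds ⟨m + 1 + s.val, by have hsl := s.isLt; omega⟩
        · beta_reduce
          rw [if_pos (by simp only [Fin.val_zero])]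
        · beta_reduce
          rw [if_neg (by simp only [Fin.val_last]; omega)]
          convert hdl using 2
          all_goals ext
          all_goals (simp [Fin.val_last]; omega)
    omega



lemma classify_half {α β γ : Fin n × Fin n} (hβ : β.1 < β.2)
    (hsum : rootVec n α + rootVec n β = rootVec n γ) (hea : γ.1 = α.1) :
    β.1 = α.2 ∧ β.2 = γ.2 := by
  have hkey : rootVec n β = rootVec n (α.2, γ.2) := by
    funext x
    have h := congrFun hsum x
    simp only [rootVec, Pi.add_apply] at h ⊢
    rw [← hea] at h
    split_ifs at h ⊢ <;> omega
  have hne : α.2 ≠ γ.2 := by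
    have hw := congrArg (wt n) hkey
    rw [wt_rootVec, wt_rootVec] at hw
    have hlt : ((β.1 : ℕ) : ℤ) < ((β.2 : ℕ) : ℤ) := by exact_mod_cast hβ
    intro he
    rw [he] at hw
    simp only at hw
    omega
  have h2 := rootVec_inj (ne_of_lt hβ) hne hkey
  exact ⟨by rw [h2], by rw [h2]⟩

lemma classify_first {α β γ : Fin n × Fin n} (hγ : γ.1 < γ.2)
    (hsum : rootVec n α + rootVec n β = rootVec n γ) :
    γ.1 = α.1 ∨ γ.1 = β.1 := by
  by_contra hcon
  push_neg at hcon
  obtain ⟨h1, h2⟩ := hcon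
  have h := congrFun hsum γ.1
  simp only [rootVec, Pi.add_apply] at h
  rw [if_neg h1, if_neg h2, if_neg (ne_of_lt hγ)] at h
  split_ifs at h <;> first | omega | exact ‹¬True› trivial

end KAux


/-- Sommers/Shi: for an upper ideal `I` and a triple `α, β, α+β` of positive roots,
`k_I(α) + k_I(β) ≤ k_I(α+β) ≤ k_I(α) + k_I(β) + 1`. -/
theorem kIdeal_subadditive (n : ℕ) (I : Set (Fin n × Fin n)) (hI : IsUpperIdeal n I)
    (α β γ : Fin n × Fin n) (hα : α.1 < α.2) (hβ : β.1 < β.2) (hγ : γ.1 < γ.2)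
    (hsum : rootVec n α + rootVec n β = rootVec n γ) :
    kIdeal n I α + kIdeal n I β ≤ kIdeal n I γ ∧
    kIdeal n I γ ≤ kIdeal n I α + kIdeal n I β + 1 := by
  rcases KAux.classify_first hγ hsum with h1 | h1
  · obtain ⟨hb1, hb2⟩ := KAux.classify_half hβ hsum h1
    have hjk : α.2 < γ.2 := by rw [← hb1, ← hb2]; exact hβ
    have heβ : β = (α.2, γ.2) := Prod.ext hb1 hb2
    have heγ : γ = (α.1, γ.2) := Prod.ext h1 rfl
    rw [heγ, heβ]
    have hlow := KAux.core_lower hI hα hjk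
    have hupp := KAux.core_upper hI hα hjk
    rw [Prod.mk.eta] at hlow hupp
    exact ⟨hlow, hupp⟩
  · have hsum' : rootVec n β + rootVec n α = rootVec n γ := by rw [add_comm]; exact hsum
    obtain ⟨ha1, ha2⟩ := KAux.classify_half hα hsum' h1
    have hjk : β.2 < γ.2 := by rw [← ha1, ← ha2]; exact hα
    have heα : α = (β.2, γ.2) := Prod.ext ha1 ha2
    have heγ : γ = (β.1, γ.2) := Prod.ext h1 rfl
    rw [heγ, heα]
    have hlow := KAux.core_lower hI hβ hjk
    have hupp := KAux.core_upper hI hβ hjk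
    rw [Prod.mk.eta] at hlow hupp
    exact ⟨by omega, by omega⟩
end

section
/- Suppose α is a positive root of type A_{n-1} and α = γ_1 + ... + γ_r where every γ_i lies in an upper order ideal I ⊆ Φ⁺. Then the summands can be reordered so that every partial sum γ_1 + ... + γ_q (1 ≤ q ≤ r) is a positive root. -/
lemma rootVec_add (n : ℕ) (a c b : Fin n) :
    rootVec n (a, c) + rootVec n (c, b) = rootVec n (a, b) := by
  funext k; simp only [Pi.add_apply, rootVec]; ring

lemma rootVec_sub (n : ℕ) (a c b : Fin n) :
    rootVec n (a, b) - rootVec n (a, c) = rootVec n (c, b) := by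
  funext k; simp only [Pi.sub_apply, rootVec]; ring

/-- weight functional -/
def wt (n : ℕ) (v : Fin n → ℤ) : ℤ := ∑ k : Fin n, ((k : ℕ) : ℤ) * v k

lemma wt_rootVec (n : ℕ) (p : Fin n × Fin n) : wt n (rootVec n p) = (p.1 : ℤ) - p.2 := by
  simp [wt, rootVec, mul_sub, Finset.sum_sub_distrib, mul_ite, mul_one, mul_zero,
    Finset.sum_ite_eq']

lemma wt_sum (n r : ℕ) (f : Fin r → Fin n → ℤ) :
    wt n (∑ t, f t) = ∑ t, wt n (f t) := by
  simp only [wt, Finset.sum_apply, Finset.mul_sum]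
  exact Finset.sum_comm

lemma Iic_succ_eq (r : ℕ) (p : Fin r) :
    Finset.Iic p.succ
      = insert (0 : Fin (r+1)) ((Finset.Iic p).map ⟨Fin.succ, Fin.succ_injective r⟩) := by
  ext t
  simp only [Finset.mem_Iic, Finset.mem_insert, Finset.mem_map, Function.Embedding.coeFn_mk]
  constructor
  · intro ht
    rcases Fin.eq_zero_or_eq_succ t with h | ⟨s, rfl⟩
    · left; exact h
    · right; exact ⟨s, by simpa [Fin.succ_le_succ_iff] using ht, rfl⟩
  · rintro (rfl | ⟨s, hs, rfl⟩)
    · exact Fin.zero_le _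
    · exact Fin.succ_le_succ_iff.mpr hs

lemma sum_Iic_succ {M : Type*} [AddCommMonoid M] (r : ℕ) (p : Fin r) (h : Fin (r+1) → M) :
    ∑ t ∈ Finset.Iic p.succ, h t = h 0 + ∑ t ∈ Finset.Iic p, h t.succ := by
  rw [Iic_succ_eq, Finset.sum_insert, Finset.sum_map]
  · rfl
  · simp only [Finset.mem_map, Function.Embedding.coeFn_mk]
    rintro ⟨s, -, hs⟩
    exact (Fin.succ_ne_zero s) hs

lemma aux (n : ℕ) : ∀ (r : ℕ) (α : Fin n × Fin n), α.1 < α.2 →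
    ∀ (γ : Fin r → Fin n × Fin n), (∀ t, (γ t).1 < (γ t).2) →
    (∑ t, rootVec n (γ t) = rootVec n α) →
    ∃ σ : Equiv.Perm (Fin r), ∀ q : Fin r, ∃ b : Fin n, α.1 < b ∧
      ∑ t ∈ Finset.Iic q, rootVec n (γ (σ t)) = rootVec n (α.1, b) := by
  intro r
  induction r with
  | zero =>
    intro α hα γ hf hsum
    exact ⟨1, fun q => q.elim0⟩
  | succ r IH =>
    intro α hα γ hf hsum
    -- find an edge starting at α.1
    have hex : ∃ t, (γ t).1 = α.1 := by
      by_contra hno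
      push_neg at hno
      have h1 : (∑ t, rootVec n (γ t)) α.1 = rootVec n α α.1 := congrFun hsum α.1
      rw [Finset.sum_apply] at h1
      have h2 : rootVec n α α.1 = 1 := by simp [rootVec, hα.ne]
      have h3 : ∀ t ∈ (Finset.univ : Finset (Fin (r+1))), rootVec n (γ t) α.1 ≤ 0 := by
        intro t _
        have : ¬ (α.1 = (γ t).1) := fun h => hno t h.symm
        simp only [rootVec, if_neg this]
        split <;> omega
      have := Finset.sum_nonpos h3
      omega
    obtain ⟨t₀, hc1⟩ := hex
    set c := (γ t₀).2 with hcdef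
    have hγt₀ : γ t₀ = (α.1, c) := by
      rw [← hc1]
    have hac : α.1 < c := by rw [← hc1]; exact hf t₀
    set τ : Equiv.Perm (Fin (r+1)) := Equiv.swap 0 t₀ with hτ
    set γ' : Fin r → Fin n × Fin n := fun t => γ (τ t.succ) with hγ'
    have hsumτ : ∑ t, rootVec n (γ (τ t)) = rootVec n α := by
      rw [← hsum]
      exact Equiv.sum_comp τ (fun t => rootVec n (γ t))
    have hsplit : rootVec n (α.1, c) + ∑ t, rootVec n (γ' t) = rootVec n α := by
      rw [← hsumτ, Fin.sum_univ_succ]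
      congr 1
      rw [hτ]
      simp [Equiv.swap_apply_left, hγt₀]
    have hsum2 : ∑ t, rootVec n (γ' t) = rootVec n (c, α.2) := by
      have : ∑ t, rootVec n (γ' t) = rootVec n α - rootVec n (α.1, c) := by
        rw [← hsplit]; abel
      rw [this, ← Prod.mk.eta (p := α), rootVec_sub]
    rcases Nat.eq_zero_or_pos r with hr | hr
    · -- only one summand
      subst hr
      refine ⟨1, fun q => ⟨α.2, hα, ?_⟩⟩
      have hq : q = 0 := Fin.fin_one_eq_zero q
      subst hq
      have hIic : Finset.Iic (0 : Fin 1) = {0} := by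
        ext t
        simp [Fin.le_zero_iff, Fin.fin_one_eq_zero t]
      rw [hIic, Finset.sum_singleton]
      have h0 : ∑ t : Fin 1, rootVec n (γ t) = rootVec n (γ 0) := by
        simp [Fin.sum_univ_succ]
      rw [show ((1 : Equiv.Perm (Fin 1)) 0) = 0 from rfl, ← h0, hsum, ← Prod.mk.eta (p := α)]
    · -- at least two summands: show c < α.2 and recurse
      have hwt : ∑ t, (((γ' t).1 : ℤ) - (γ' t).2) = (c : ℤ) - α.2 := by
        have h1 : wt n (∑ t, rootVec n (γ' t)) = wt n (rootVec n (c, α.2)) := by rw [hsum2]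
        rw [wt_sum, wt_rootVec] at h1
        simpa only [wt_rootVec] using h1
      have hneg : ∑ t : Fin r, (((γ' t).1 : ℤ) - (γ' t).2) < 0 := by
        have : (Finset.univ : Finset (Fin r)).Nonempty := by
          simpa [Finset.univ_nonempty_iff, ← Fin.pos_iff_nonempty] using hr
        refine Finset.sum_neg (fun t _ => ?_) this
        have := hf (τ t.succ)
        have : ((γ' t).1 : ℕ) < (γ' t).2 := this
        omega
      have hcα : c < α.2 := by
        have : (c : ℕ) < (α.2 : ℕ) := by omega
        exact this
      obtain ⟨σ', hσ'⟩ := IH (c, α.2) hcα γ' (fun t => hf (τ t.succ)) hsum2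
      set ext : Equiv.Perm (Fin (r+1)) := Equiv.Perm.decomposeFin.symm (0, σ') with hext
      refine ⟨ext.trans τ, fun q => ?_⟩
      induction q using Fin.cases with
      | zero =>
        refine ⟨c, hac, ?_⟩
        have hIic : Finset.Iic (0 : Fin (r+1)) = {0} := by
          ext t; simp [Fin.le_zero_iff]
        rw [hIic, Finset.sum_singleton]
        have h0 : (ext.trans τ) 0 = t₀ := by
          simp [hext, hτ, Equiv.Perm.decomposeFin_symm_apply_zero]
        rw [h0, hγt₀]
      | succ p =>
        obtain ⟨b, hb1, hb2⟩ := hσ' p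
        refine ⟨b, lt_trans hac hb1, ?_⟩
        rw [sum_Iic_succ]
        have h0 : (ext.trans τ) 0 = t₀ := by
          simp [hext, hτ, Equiv.Perm.decomposeFin_symm_apply_zero]
        have hsucc : ∀ t : Fin r, γ ((ext.trans τ) t.succ) = γ' (σ' t) := by
          intro t
          have : ext t.succ = (σ' t).succ := by
            simp [hext, Equiv.Perm.decomposeFin_symm_apply_succ]
          simp [Equiv.trans_apply, this, hγ']
        rw [h0, hγt₀]
        have : ∑ t ∈ Finset.Iic p, rootVec n (γ ((ext.trans τ) t.succ))
            = ∑ t ∈ Finset.Iic p, rootVec n (γ' (σ' t)) := by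
          refine Finset.sum_congr rfl fun t _ => by rw [hsucc t]
        rw [this, hb2, rootVec_add]

/-- Sommers' Lemma 3.2: if a positive root `α` is a sum of roots `γ_1, …, γ_r` lying in an
upper ideal `I`, the summands can be reordered so that every partial sum is a positive
root. -/
theorem reorder_partial_sums (n r : ℕ) (I : Set (Fin n × Fin n)) (hI : IsUpperIdeal n I)
    (α : Fin n × Fin n) (hα : α.1 < α.2)
    (γ : Fin r → Fin n × Fin n) (hγ : ∀ t, γ t ∈ I)
    (hsum : ∑ t, rootVec n (γ t) = rootVec n α) :
    ∃ σ : Equiv.Perm (Fin r), ∀ q : Fin r, ∃ a b : Fin n, a < b ∧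
      ∑ t ∈ Finset.Iic q, rootVec n (γ (σ t)) = rootVec n (a, b) := by
  obtain ⟨σ, hσ⟩ := aux n r α hα γ (fun t => hI.1 _ (hγ t)) hsum
  exact ⟨σ, fun q => by obtain ⟨b, hb1, hb2⟩ := hσ q; exact ⟨α.1, b, hb1, hb2⟩⟩
end

section
/- The chambers of the Shi arrangement Shi(n) are in bijection with pairs (w, I) where w ∈ S_n and I ⊆ Φ⁺ is an upper order ideal of positive roots such that every minimal element (i,j) of I is a non-inversion of w (i.e., w(i) < w(j)). Consequently the number of such pairs is (n+1)^{n-1}. -/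
/-!
The minimal elements of an upper ideal `I` form an antichain `A` of the root poset, and `A`
determines `I`. Read as arcs `i → j`, such an antichain is a nonnesting arc system whose chains
are the blocks of a nonnesting set partition of `Fin n`, and the condition on `w` says that `w`
increases along every block. Sending each label `a` to the first element of the block of `w⁻¹ a`
is a bijection onto parking functions. Indeed the number of labels sent to `p` is the size `m p`
of the block starting at `p`; these sizes satisfy the Dyck condition, a nonnesting partition
is determined by them, and every Dyck vector occurs (induct on the least point `s`, which is
either a singleton block or joined to the least point that starts no block); then `w` is the
unique bijection that is increasing on blocks and maps each block onto the prescribed set of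
labels. Finally, by the cycle lemma exactly one of the `n + 1` translates of any
`g : Fin n → ZMod (n + 1)` is a parking function, so there are `(n + 1) ^ (n - 1)` of them.
-/

open Finset

theorem existsUnique_lt_forall_le_add {N : ℕ} (hN : 0 < N) (S : ℕ → ℤ)
    (hS : ∀ j, S (j + N) = S j - 1) : ∃! c, c < N ∧ ∀ j < N, S c ≤ S (c + j) := by
  classical
  have hmin : ∃ c, c < N ∧ ∀ c' < N, S c ≤ S c' := by
    obtain ⟨c, hc, hmin⟩ := (range N).exists_min_image S ⟨0, mem_range.2 hN⟩
    exact ⟨c, mem_range.1 hc, fun c' hc' => hmin c' (mem_range.2 hc')⟩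
  set c := Nat.find hmin
  obtain ⟨hcN, hcmin⟩ : c < N ∧ ∀ c' < N, S c ≤ S c' := Nat.find_spec hmin
  have hfirst : ∀ c' < c, S c < S c' := fun c' hc' => by
    have hc'N : c' < N := hc'.trans hcN
    by_contra! h
    exact Nat.find_min hmin hc' ⟨hc'N, fun c'' hc'' => h.trans (hcmin c'' hc'')⟩
  refine ⟨c, ⟨hcN, fun j hj => ?_⟩, fun c' ⟨hc'N, hc'⟩ => ?_⟩
  · by_cases hcj : c + j < N
    · exact hcmin _ hcj
    · have := hfirst (c + j - N) (by omega)
      rw [show c + j = c + j - N + N by omega, hS]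
      omega
  · by_contra hne
    rcases lt_or_gt_of_ne hne with hlt | hlt
    · have := hc' (c - c') (by omega)
      rw [show c' + (c - c') = c by omega] at this
      exact (hfirst c' hlt).not_ge this
    · have := hc' (c + N - c') (by omega)
      rw [show c' + (c + N - c') = c + N by omega, hS] at this
      have := hcmin c' hc'N
      omega

theorem cycle_lemma {N : ℕ} (hN : 0 < N) (x : ℕ → ℤ)
    (hx : ∀ j, ∑ t ∈ range N, x (j + t) = -1) :
    ∃! c, c < N ∧ ∀ j < N, 0 ≤ ∑ t ∈ range j, x (c + t) := by
  set S : ℕ → ℤ := fun j => ∑ t ∈ range j, x t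
  have hwindow : ∀ c j, ∑ t ∈ range j, x (c + t) = S (c + j) - S c := fun c j => by
    simp only [S, sum_range_add]; ring
  have hS : ∀ j, S (j + N) = S j - 1 := fun j => by
    have := hwindow j N
    rw [hx] at this
    linarith
  simpa only [hwindow, sub_nonneg] using existsUnique_lt_forall_le_add hN S hS

def IsParking {ι : Type*} [Fintype ι] (f : ι → ℕ) : Prop :=
  ∀ j ≤ Fintype.card ι, j ≤ #{a | f a < j}

lemma IsParking.lt_card {ι : Type*} [Fintype ι] {f : ι → ℕ} (hf : IsParking f) (a : ι) :
    f a < Fintype.card ι := by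
  have hall : #{a | f a < Fintype.card ι} = #(univ : Finset ι) :=
    le_antisymm (card_le_univ _) (hf _ le_rfl)
  simpa using (filter_eq_self.1 (eq_of_subset_of_card_le (filter_subset _ _) hall.ge)) a

section Pollak

variable {n : ℕ}

lemma card_val_sub_lt (g : Fin n → ZMod (n + 1)) (c j : ℕ) (hj : j ≤ n + 1) :
    #{a | (g a - c).val < j} = ∑ t ∈ range j, #{a | g a = ((c + t : ℕ) : ZMod (n + 1))} := by
  rw [card_eq_sum_card_fiberwise (f := fun a => (g a - c).val) (t := range j)
    (fun a ha => mem_range.2 (mem_filter.1 ha).2)]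
  refine sum_congr rfl fun t ht => congrArg card (ext fun a => ?_)
  have ht' : t < n + 1 := (mem_range.1 ht).trans_le hj
  simp only [mem_filter, mem_univ, true_and, Nat.cast_add]
  constructor
  · rintro ⟨-, h⟩
    rw [← h, ZMod.natCast_zmod_val]; ring
  · intro h
    have hval : (g a - c).val = t := by rw [h, add_sub_cancel_left, ZMod.val_natCast_of_lt ht']
    exact ⟨hval ▸ mem_range.1 ht, hval⟩

lemma existsUnique_isParking_sub (g : Fin n → ZMod (n + 1)) :
    ∃! c : ZMod (n + 1), IsParking fun a => (g a - c).val := by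
  set x : ℕ → ℤ := fun t => #{a | g a = (t : ZMod (n + 1))} - 1
  have hprefix : ∀ c : ℕ, IsParking (fun a => (g a - c).val) ↔
      ∀ j < n + 1, 0 ≤ ∑ t ∈ range j, x (c + t) := fun c => by
    simp only [IsParking, Fintype.card_fin, ← Nat.lt_succ_iff]
    refine forall₂_congr fun j hj => ?_
    simp only [x, card_val_sub_lt g c j (by omega), sum_sub_distrib, sum_const, card_range]
    push_cast; simp [← Nat.cast_sum]
  have hwindow : ∀ j, ∑ t ∈ range (n + 1), x (j + t) = -1 := fun j => by
    have hall : #{a | (g a - j).val < n + 1} = n := by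
      rw [filter_true_of_mem fun a _ => ZMod.val_lt _, card_univ, Fintype.card_fin]
    rw [card_val_sub_lt g j _ le_rfl] at hall
    simp only [x, sum_sub_distrib, sum_const, card_range, ← Nat.cast_sum, hall]
    simp
  obtain ⟨c, ⟨-, hc⟩, huniq⟩ := cycle_lemma (Nat.succ_pos n) x hwindow
  refine ⟨c, (hprefix c).2 hc, fun z hz => ?_⟩
  rw [← ZMod.natCast_zmod_val z] at hz ⊢
  rw [huniq z.val ⟨ZMod.val_lt z, (hprefix _).1 hz⟩]

lemma bijective_parkingShift (n : ℕ) :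
    Function.Bijective fun p : {f : Fin n → Fin n // IsParking fun a => (f a : ℕ)} ×
      ZMod (n + 1) => fun a => ((p.1.1 a : ℕ) : ZMod (n + 1)) + p.2 := by
  have hsub : ∀ (f : Fin n → Fin n) c a, (((f a : ℕ) : ZMod (n + 1)) + c - c).val = f a :=
    fun f c a => by simp [ZMod.val_natCast_of_lt ((f a).2.trans (Nat.lt_succ_self n))]
  constructor
  · rintro ⟨f, c⟩ ⟨f', c'⟩ h
    have h' := congrFun h
    simp only at h'
    have hc : c = c' :=
      (existsUnique_isParking_sub fun a => ((f.1 a : ℕ) : ZMod (n + 1)) + c).unique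
        (by simpa only [hsub] using f.2) (by simpa only [h', hsub] using f'.2)
    subst hc
    refine Prod.ext (Subtype.ext (funext fun a => Fin.ext ?_)) rfl
    rw [← hsub f c a, ← hsub f' c a, h']
  · intro g
    obtain ⟨c, hc, -⟩ := existsUnique_isParking_sub g
    refine ⟨(⟨fun a => ⟨(g a - c).val, by simpa using hc.lt_card a⟩, hc⟩, c), ?_⟩
    ext; simp

theorem card_parkingFunctions (n : ℕ) :
    Nat.card {f : Fin n → Fin n // IsParking fun a => (f a : ℕ)} = (n + 1) ^ (n - 1) := by
  have hcard := Nat.card_eq_of_bijective _ (bijective_parkingShift n)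
  rw [Nat.card_prod, Nat.card_zmod, Nat.card_fun, Nat.card_zmod,
    Nat.card_eq_fintype_card (α := Fin n), Fintype.card_fin] at hcard
  rcases n with _ | n
  · simpa using hcard
  · rw [pow_succ] at hcard
    exact Nat.eq_of_mul_eq_mul_right (Nat.succ_pos _) hcard

end Pollak

section NonnestingPartitions

variable {α : Type*} [LinearOrder α]

structure IsNonnesting (A : Set (α × α)) : Prop where
  fst_lt_snd : ∀ p ∈ A, p.1 < p.2
  eq_of_nested : ∀ p ∈ A, ∀ q ∈ A, p.1 ≤ q.1 → q.2 ≤ p.2 → p = q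

namespace IsNonnesting

variable {A B : Set (α × α)} {i j k l : α}

lemma lt (hA : IsNonnesting A) (h : (i, j) ∈ A) : i < j := hA.fst_lt_snd _ h

lemma snd_lt_snd (hA : IsNonnesting A) (h : (i, j) ∈ A) (h' : (k, l) ∈ A) (hik : i < k) :
    j < l := by
  by_contra! hle
  cases hA.eq_of_nested _ h _ h' hik.le hle
  exact hik.false

lemma fst_eq (hA : IsNonnesting A) (h : (i, k) ∈ A) (h' : (j, k) ∈ A) : i = j := by
  rcases le_total i j with hij | hij
  · exact congrArg Prod.fst (hA.eq_of_nested _ h _ h' hij le_rfl)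
  · exact (congrArg Prod.fst (hA.eq_of_nested _ h' _ h hij le_rfl)).symm

lemma snd_eq (hA : IsNonnesting A) (h : (i, j) ∈ A) (h' : (i, k) ∈ A) : j = k := by
  rcases le_total j k with hjk | hjk
  · exact (congrArg Prod.snd (hA.eq_of_nested _ h' _ h le_rfl hjk)).symm
  · exact congrArg Prod.snd (hA.eq_of_nested _ h _ h' le_rfl hjk)

lemma mono (hA : IsNonnesting A) (hBA : B ⊆ A) : IsNonnesting B :=
  ⟨fun p hp => hA.fst_lt_snd p (hBA hp), fun p hp q hq => hA.eq_of_nested p (hBA hp) q (hBA hq)⟩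

lemma insert_of_lt (hA : IsNonnesting A) (hij : i < j) (hlt : ∀ p ∈ A, i < p.1 ∧ j < p.2) :
    IsNonnesting (insert (i, j) A) := by
  refine ⟨?_, ?_⟩
  · rintro p (rfl | hp)
    exacts [hij, hA.fst_lt_snd p hp]
  · rintro p (rfl | hp) q (rfl | hq) h1 h2
    · rfl
    · exact absurd h2 (hlt q hq).2.not_ge
    · exact absurd h1 (hlt p hp).1.not_ge
    · exact hA.eq_of_nested p hp q hq h1 h2

lemma eq_insert_sep (hA : IsNonnesting A) (hij : (i, j) ∈ A) :
    A = insert (i, j) {q ∈ A | q.1 ≠ i} := by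
  ext ⟨k, l⟩
  constructor
  · intro hkl
    by_cases hki : k = i
    · subst hki; left; rw [hA.snd_eq hkl hij]
    · exact Or.inr ⟨hkl, hki⟩
  · rintro (h | h)
    · rw [h]; exact hij
    · exact h.1

end IsNonnesting

section ChainMin

variable [WellFoundedLT α] {A : Set (α × α)} {j k : α}

open Classical in
noncomputable def chainMin (A : Set (α × α)) : α → α :=
  wellFounded_lt.fix fun k ih =>
    if h : ∃ j < k, (j, k) ∈ A then ih h.choose h.choose_spec.1 else k

open Classical in
lemma chainMin_eq (A : Set (α × α)) (k : α) :
    chainMin A k = if h : ∃ j < k, (j, k) ∈ A then chainMin A h.choose else k :=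
  wellFounded_lt.fix_eq _ k

lemma chainMin_of_forall_notMem (h : ∀ j, (j, k) ∉ A) : chainMin A k = k := by
  rw [chainMin_eq, dif_neg (by simp [h])]

namespace IsNonnesting

variable (hA : IsNonnesting A)
include hA

lemma chainMin_of_mem (h : (j, k) ∈ A) : chainMin A k = chainMin A j := by
  have hex : ∃ j < k, (j, k) ∈ A := ⟨j, hA.lt h, h⟩
  rw [chainMin_eq, dif_pos hex, hA.fst_eq hex.choose_spec.2 h]

theorem induction {P : α → Prop} (start : ∀ k, (∀ j, (j, k) ∉ A) → P k)
    (step : ∀ j k, (j, k) ∈ A → P j → P k) (k : α) : P k := by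
  induction k using WellFoundedLT.induction with
  | _ k ih =>
    by_cases h : ∃ j, (j, k) ∈ A
    · obtain ⟨j, hj⟩ := h
      exact step j k hj (ih j (hA.lt hj))
    · exact start k (not_exists.1 h)

lemma chainMin_le (k : α) : chainMin A k ≤ k := by
  induction k using hA.induction with
  | start k h => exact (chainMin_of_forall_notMem h).le
  | step i k hik ih => exact (hA.chainMin_of_mem hik).trans_le (ih.trans (hA.lt hik).le)

lemma notMem_chainMin (j k : α) : (j, chainMin A k) ∉ A := by
  induction k using hA.induction with
  | start k h => rw [chainMin_of_forall_notMem h]; exact h j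
  | step i k hik ih => rwa [hA.chainMin_of_mem hik]

lemma eq_of_chainMin_eq (hp : ∀ u, (k, u) ∉ A) {l : α} (hl : chainMin A l = k) : l = k := by
  induction l using hA.induction with
  | start l h => rwa [chainMin_of_forall_notMem h] at hl
  | step i l hil ih =>
    rw [hA.chainMin_of_mem hil] at hl
    exact absurd (ih hl ▸ hil) (hp l)

lemma not_lt_of_chainMin_eq {i l : α} (hil : (i, l) ∈ A) (hk : chainMin A k = chainMin A l)
    (hik : i < k) : ¬k < l := by
  induction l using WellFoundedLT.induction generalizing i k with
  | _ l ih =>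
    intro hkl
    have hki : chainMin A k ≤ i := by rw [hk, hA.chainMin_of_mem hil]; exact hA.chainMin_le i
    obtain ⟨h, hhk⟩ : ∃ h, (h, k) ∈ A := by
      by_contra! hnone
      rw [chainMin_of_forall_notMem hnone] at hki
      exact hki.not_gt hik
    rcases lt_trichotomy h i with hhi | rfl | hhi
    · exact ih k hkl hhk (by rw [hk, hA.chainMin_of_mem hil]) hhi hik
    · exact hkl.ne (hA.snd_eq hhk hil)
    · exact (hA.snd_lt_snd hil hhk hhi).not_gt hkl

end IsNonnesting
end ChainMin

section Blocks

variable [WellFoundedLT α] {A A' : Set (α × α)} {S : Finset α} {i j k p : α}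

lemma IsNonnesting.lt_of_chainMin_eq {β : Type*} [Preorder β] (hA : IsNonnesting A)
    {w : α → β} (hw : ∀ q ∈ A, w q.1 < w q.2) {k l : α} (hkl : chainMin A k = chainMin A l)
    (hlt : k < l) : w k < w l := by
  induction l using WellFoundedLT.induction generalizing k with
  | _ l ih =>
    obtain ⟨i, hil⟩ : ∃ i, (i, l) ∈ A := by
      by_contra! h
      rw [chainMin_of_forall_notMem h] at hkl
      exact (hkl ▸ hA.chainMin_le k).not_gt hlt
    rcases lt_trichotomy i k with hik | rfl | hki
    · exact absurd hlt (hA.not_lt_of_chainMin_eq hil hkl hik)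
    · exact hw _ hil
    · exact (ih i (hA.lt hil) (hkl.trans (hA.chainMin_of_mem hil)) hki).trans (hw _ hil)

noncomputable def blockSize (S : Finset α) (A : Set (α × α)) (p : α) : ℕ :=
  #{k ∈ S | chainMin A k = p}

lemma IsNonnesting.blockSize_eq_zero (hA : IsNonnesting A) (h : (i, p) ∈ A) :
    blockSize S A p = 0 :=
  card_eq_zero.2 <| filter_false_of_mem fun k _ hk => hA.notMem_chainMin i k (hk ▸ h)

lemma IsNonnesting.blockSize_isolated (hA : IsNonnesting A) (hi : i ∈ S)
    (hiA : ∀ q ∈ A, q.1 ≠ i ∧ q.2 ≠ i) :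
    blockSize S A i = 1 ∧ ∀ p ≠ i, blockSize S A p = blockSize (S.erase i) A p := by
  have hself : chainMin A i = i := chainMin_of_forall_notMem fun j h => (hiA _ h).2 rfl
  have hblock : ∀ {k}, chainMin A k = i → k = i :=
    hA.eq_of_chainMin_eq fun u h => (hiA _ h).1 rfl
  refine ⟨card_eq_one.2 ⟨i, ext fun k => ?_⟩, fun p hp => ?_⟩
  · simp only [mem_filter, mem_singleton]
    exact ⟨fun h => hblock h.2, by rintro rfl; exact ⟨hi, hself⟩⟩
  · rw [blockSize, blockSize, filter_erase, erase_eq_of_notMem]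
    simp [hself, hp.symm]

lemma chainMin_insert (hA : IsNonnesting (insert (i, j) A')) (hi : ∀ q ∈ A', q.2 ≠ i)
    (k : α) :
    chainMin (insert (i, j) A') k = if chainMin A' k = j then i else chainMin A' k := by
  have hA' : IsNonnesting A' := hA.mono (Set.subset_insert _ _)
  have hii : chainMin (insert (i, j) A') i = i := chainMin_of_forall_notMem fun h hh => by
    rcases hh with hh | hh
    · exact (hA.lt (Set.mem_insert _ _)).ne (congrArg Prod.snd hh)
    · exact hi _ hh rfl
  induction k using hA'.induction with
  | start k hk =>
    rw [chainMin_of_forall_notMem hk]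
    by_cases hkj : k = j
    · rw [if_pos hkj, hkj, hA.chainMin_of_mem (Set.mem_insert _ _), hii]
    · rw [if_neg hkj, chainMin_of_forall_notMem]
      rintro h (hh | hh)
      exacts [hkj (congrArg Prod.snd hh), hk h hh]
  | step h k hhk ih =>
    rw [hA.chainMin_of_mem (Set.mem_insert_of_mem _ hhk), hA'.chainMin_of_mem hhk, ih]

lemma blockSize_insert (hA : IsNonnesting (insert (i, j) A')) (hi : i ∈ S)
    (hiA' : ∀ q ∈ A', q.1 ≠ i ∧ q.2 ≠ i) :
    blockSize S (insert (i, j) A') i = blockSize (S.erase i) A' j + 1 ∧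
      ∀ p ≠ i, p ≠ j → blockSize S (insert (i, j) A') p = blockSize (S.erase i) A' p := by
  have hA' : IsNonnesting A' := hA.mono (Set.subset_insert _ _)
  have hmin := chainMin_insert hA fun q hq => (hiA' q hq).2
  have hblock : ∀ {k}, chainMin A' k = i → k = i :=
    hA'.eq_of_chainMin_eq fun u h => (hiA' _ h).1 rfl
  have hself : chainMin A' i = i := chainMin_of_forall_notMem fun _ h => (hiA' _ h).2 rfl
  refine ⟨?_, fun p hpi hpj => congrArg card (ext fun k => ?_)⟩
  · have hfilter : {k ∈ S | chainMin (insert (i, j) A') k = i} =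
        insert i {k ∈ S.erase i | chainMin A' k = j} := by
      ext k
      by_cases hk : k = i
      · subst hk; simp [hmin, hself, hi]
      · have := @hblock k
        simp only [mem_filter, hmin, mem_insert, hk, mem_erase, ne_eq, not_false_eq_true,
          true_and, false_or]
        split_ifs <;> tauto
    rw [blockSize, hfilter, card_insert_of_notMem (by simp)]
    rfl
  · by_cases hk : k = i
    · subst hk; simp [hmin, hself, hpi.symm]
    · simp only [mem_filter, hmin, mem_erase, hk, ne_eq, not_false_eq_true, true_and]
      split_ifs with h <;> simp [h, Ne.symm hpi, Ne.symm hpj]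

end Blocks

section MinDecomposition

variable {A : Set (α × α)} {S : Finset α} {s u : α}
  (hA : IsNonnesting A) (hAS : A ⊆ (S : Set α) ×ˢ (S : Set α)) (hs : s ∈ S)
  (hsmin : ∀ t ∈ S, s ≤ t)

namespace IsNonnesting
include hA hAS hsmin

lemma snd_ne_min (q : α × α) (hq : q ∈ A) : q.2 ≠ s :=
  fun h => ((hsmin _ (hAS hq).1).trans_lt (hA.fst_lt_snd q hq)).ne' h

lemma sep_subset_erase :
    {q ∈ A | q.1 ≠ s} ⊆ (↑(S.erase s) : Set α) ×ˢ (↑(S.erase s) : Set α) := by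
  rintro q ⟨hq, hqs⟩
  exact ⟨mem_erase.2 ⟨hqs, (hAS hq).1⟩, mem_erase.2 ⟨hA.snd_ne_min hAS hsmin q hq, (hAS hq).2⟩⟩

variable [WellFoundedLT α]

lemma isLeast_of_mem (hsu : (s, u) ∈ A) : IsLeast {p | p ∈ S ∧ blockSize S A p = 0} u := by
  refine ⟨⟨(hAS hsu).2, hA.blockSize_eq_zero hsu⟩, fun p ⟨hp, hp0⟩ => ?_⟩
  by_contra! hpu
  obtain ⟨i, hip⟩ : ∃ i, (i, p) ∈ A := by
    by_contra! hin
    refine (card_pos.2 ⟨p, ?_⟩).ne' hp0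
    simpa [chainMin_of_forall_notMem hin] using hp
  have his : s < i := by
    refine (hsmin _ (hAS hip).1).lt_of_ne ?_
    rintro rfl
    exact hpu.ne (hA.snd_eq hip hsu)
  exact (hA.snd_lt_snd hsu hip his).not_gt hpu

include hs

open Classical in
lemma blockSize_sep (p : α) (hp : p ∈ S.erase s) :
    blockSize (S.erase s) {q ∈ A | q.1 ≠ s} p =
      if (s, p) ∈ A then blockSize S A s - 1 else blockSize S A p := by
  have hps : p ≠ s := (mem_erase.1 hp).1
  by_cases hout : ∃ u, (s, u) ∈ A
  · obtain ⟨u, hsu⟩ := hout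
    have hins := hA.eq_insert_sep hsu
    obtain ⟨hs', hother⟩ := blockSize_insert (hins ▸ hA) hs
      fun q hq => ⟨hq.2, hA.snd_ne_min hAS hsmin q hq.1⟩
    rw [← hins] at hs' hother
    by_cases hpu : p = u
    · subst hpu; rw [if_pos hsu, hs', Nat.add_sub_cancel]
    · rw [if_neg fun h => hpu (hA.snd_eq h hsu), hother p hps hpu]
  · simp only [not_exists] at hout
    have hsep : {q ∈ A | q.1 ≠ s} = A :=
      Set.sep_eq_self_iff_mem_true.2 fun q hq hqs => hout q.2 (hqs ▸ hq)
    rw [if_neg (hout p), hsep, ((hA.blockSize_isolated hs fun q hq =>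
      ⟨fun h => hout q.2 (h ▸ hq), hA.snd_ne_min hAS hsmin q hq⟩).2 p hps)]

lemma two_le_blockSize_iff : 2 ≤ blockSize S A s ↔ ∃ u, (s, u) ∈ A := by
  have hself : chainMin A s = s :=
    chainMin_of_forall_notMem fun j h => hA.snd_ne_min hAS hsmin _ h rfl
  constructor
  · intro h2
    by_contra! hout
    have := (hA.blockSize_isolated hs fun q hq =>
      ⟨fun h => hout q.2 (h ▸ hq), hA.snd_ne_min hAS hsmin q hq⟩).1
    omega
  · rintro ⟨u, hsu⟩
    refine one_lt_card.2 ⟨s, ?_, u, ?_, (hA.lt hsu).ne⟩ <;> simp only [mem_filter]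
    exacts [⟨hs, hself⟩, ⟨(hAS hsu).2, (hA.chainMin_of_mem hsu).trans hself⟩]

lemma mem_of_blockSize_eq {B : Set (α × α)} (hB : IsNonnesting B)
    (hBS : B ⊆ (S : Set α) ×ˢ (S : Set α))
    (h : ∀ p ∈ S, blockSize S A p = blockSize S B p) (hsu : (s, u) ∈ A) : (s, u) ∈ B := by
  obtain ⟨v, hsv⟩ := (hB.two_le_blockSize_iff hBS hs hsmin).1
    (h s hs ▸ (hA.two_le_blockSize_iff hAS hs hsmin).2 ⟨u, hsu⟩)
  have hzero : {p | p ∈ S ∧ blockSize S B p = 0} = {p | p ∈ S ∧ blockSize S A p = 0} :=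
    Set.ext fun p => and_congr_right fun hp => by rw [h p hp]
  rwa [(hA.isLeast_of_mem hAS hsmin hsu).unique (hzero ▸ hB.isLeast_of_mem hBS hsmin hsv)]

end IsNonnesting

end MinDecomposition

section Uniqueness

variable [WellFoundedLT α]

theorem IsNonnesting.eq_of_blockSize_eq {A B : Set (α × α)} {S : Finset α}
    (hA : IsNonnesting A) (hB : IsNonnesting B) (hAS : A ⊆ (S : Set α) ×ˢ (S : Set α))
    (hBS : B ⊆ (S : Set α) ×ˢ (S : Set α))
    (h : ∀ p ∈ S, blockSize S A p = blockSize S B p) : A = B := by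
  induction S using Finset.strongInduction generalizing A B with
  | H S ih =>
  rcases S.eq_empty_or_nonempty with rfl | hS
  · simp only [coe_empty, Set.empty_prod, Set.subset_empty_iff] at hAS hBS
    rw [hAS, hBS]
  set s := S.min' hS
  have hs : s ∈ S := S.min'_mem hS
  have hsmin : ∀ t ∈ S, s ≤ t := fun t ht => S.min'_le t ht
  have hout : ∀ u, (s, u) ∈ A ↔ (s, u) ∈ B := fun u =>
    ⟨hA.mem_of_blockSize_eq hAS hs hsmin hB hBS h,
      hB.mem_of_blockSize_eq hBS hs hsmin hA hAS fun p hp => (h p hp).symm⟩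
  have hsep : {q ∈ A | q.1 ≠ s} = {q ∈ B | q.1 ≠ s} := by
    refine ih _ (erase_ssubset hs) (hA.mono (Set.sep_subset _ _)) (hB.mono (Set.sep_subset _ _))
      (hA.sep_subset_erase hAS hsmin) (hB.sep_subset_erase hBS hsmin) fun p hp => ?_
    rw [hA.blockSize_sep hAS hs hsmin p hp, hB.blockSize_sep hBS hs hsmin p hp, h s hs,
      h p (mem_of_mem_erase hp)]
    by_cases hsp : (s, p) ∈ A
    · rw [if_pos hsp, if_pos ((hout p).1 hsp)]
    · rw [if_neg hsp, if_neg (mt (hout p).2 hsp)]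
  ext ⟨k, l⟩
  by_cases hk : k = s
  · subst hk; exact hout l
  · simpa [hk] using congrArg ((k, l) ∈ ·) hsep

end Uniqueness

section Dyck

variable {S : Finset α} {m : α → ℕ} {s j : α}

def IsDyck (S : Finset α) (m : α → ℕ) : Prop :=
  ∀ t, #{x ∈ S | x ≤ t} ≤ ∑ x ∈ S with x ≤ t, m x

lemma sum_erase_update {T : Finset α} (hs : s ∈ T) (hj : j ∈ T) (hsj : s ≠ j) (hmj : m j = 0)
    (hms : 1 ≤ m s) :
    ∑ p ∈ T.erase s, Function.update m j (m s - 1) p = ∑ p ∈ T, m p - 1 := by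
  have hj' : j ∈ T.erase s := mem_erase.2 ⟨hsj.symm, hj⟩
  rw [sum_update_of_mem hj', ← add_sum_erase _ _ hs, ← add_sum_erase _ _ hj', hmj,
    sdiff_singleton_eq_erase]
  omega

namespace IsDyck

lemma one_le (hm : IsDyck S m) (hs : s ∈ S) (hsmin : ∀ t ∈ S, s ≤ t) : 1 ≤ m s := by
  have hT : {x ∈ S | x ≤ s} = {s} := ext fun x => by
    simp only [mem_filter, mem_singleton]
    exact ⟨fun h => le_antisymm h.2 (hsmin x h.1), by rintro rfl; exact ⟨hs, le_rfl⟩⟩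
  simpa [hT] using hm s

lemma erase_of_eq_one (hm : IsDyck S m) (hs : s ∈ S) (hms : m s = 1) : IsDyck (S.erase s) m := by
  intro t
  rw [filter_erase]
  by_cases hst : s ≤ t
  · have hsT : s ∈ {x ∈ S | x ≤ t} := mem_filter.2 ⟨hs, hst⟩
    have := hm t
    rw [← add_sum_erase _ _ hsT, ← card_erase_add_one hsT, hms] at this
    omega
  · have hsT : s ∉ {x ∈ S | x ≤ t} := by simp [hst]
    rw [erase_eq_of_notMem hsT]
    exact hm t

lemma erase_update (hm : IsDyck S m) (hs : s ∈ S) (hj : j ∈ S) (hsj : s < j) (hmj : m j = 0)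
    (hjmin : ∀ p ∈ S, p < j → m p ≠ 0) :
    IsDyck (S.erase s) (Function.update m j (m s - 1)) := by
  intro t
  rw [filter_erase]
  by_cases hjt : j ≤ t
  · have hsT : s ∈ {x ∈ S | x ≤ t} := mem_filter.2 ⟨hs, hsj.le.trans hjt⟩
    rw [sum_erase_update hsT (mem_filter.2 ⟨hj, hjt⟩) hsj.ne hmj
      (Nat.one_le_iff_ne_zero.2 (hjmin s hs hsj)), card_erase_of_mem hsT]
    exact Nat.sub_le_sub_right (hm t) 1
  · push Not at hjt
    refine le_trans ?_ (card_nsmul_le_sum _ _ 1 fun p hp => ?_)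
    · simp
    · obtain ⟨hps, hpS, hpt⟩ : p ≠ s ∧ p ∈ S ∧ p ≤ t := by simpa using hp
      have hpj : p < j := hpt.trans_lt hjt
      rw [Function.update_of_ne hpj.ne]
      exact Nat.one_le_iff_ne_zero.2 (hjmin p hpS hpj)

end IsDyck

lemma IsNonnesting.insert_blockSize_eq [WellFoundedLT α] {A' : Set (α × α)}
    (hA' : IsNonnesting A') (hA'S : A' ⊆ (↑(S.erase s) : Set α) ×ˢ (↑(S.erase s) : Set α))
    (hs : s ∈ S) (hsmin : ∀ t ∈ S, s ≤ t) (hj : j ∈ S) (hmj : m j = 0)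
    (hjmin : ∀ p ∈ S, p < j → m p ≠ 0) (hms : 2 ≤ m s)
    (hA'm : ∀ p ∈ S.erase s, blockSize (S.erase s) A' p = Function.update m j (m s - 1) p) :
    IsNonnesting (insert (s, j) A') ∧ ∀ p ∈ S, blockSize S (insert (s, j) A') p = m p := by
  have hsj : s < j := (hsmin j hj).lt_of_ne fun h => by rw [← h] at hmj; omega
  have hA'j : blockSize (S.erase s) A' j = m s - 1 := by
    rw [hA'm j (mem_erase.2 ⟨hsj.ne', hj⟩), Function.update_self]
  have hA : IsNonnesting (insert (s, j) A') := hA'.insert_of_lt hsj fun q hq => by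
    obtain ⟨hq1, hq2⟩ := hA'S hq
    refine ⟨(hsmin _ (mem_of_mem_erase hq1)).lt_of_ne (mem_erase.1 hq1).1.symm, ?_⟩
    have h0 := hA'.blockSize_eq_zero (S := S.erase s) hq
    have hqj : q.2 ≠ j := fun h => by rw [h] at h0; omega
    rw [hA'm _ hq2, Function.update_of_ne hqj] at h0
    exact (le_of_not_gt fun h => hjmin _ (mem_of_mem_erase hq2) h h0).lt_of_ne' hqj
  obtain ⟨hins_s, hins⟩ := blockSize_insert hA hs fun q hq =>
    ⟨(mem_erase.1 (hA'S hq).1).1, (mem_erase.1 (hA'S hq).2).1⟩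
  refine ⟨hA, fun p hp => ?_⟩
  by_cases hps : p = s
  · rw [hps, hins_s, hA'j]; omega
  by_cases hpj : p = j
  · rw [hpj, hA.blockSize_eq_zero (Set.mem_insert _ _), hmj]
  · rw [hins p hps hpj, hA'm p (mem_erase.2 ⟨hps, hp⟩), Function.update_of_ne hpj]

theorem exists_isNonnesting_blockSize_eq [WellFoundedLT α] (hm : IsDyck S m)
    (hsum : ∑ p ∈ S, m p = #S) :
    ∃ A, IsNonnesting A ∧ A ⊆ (S : Set α) ×ˢ (S : Set α) ∧
      ∀ p ∈ S, blockSize S A p = m p := by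
  induction S using Finset.strongInduction generalizing m with
  | H S ih =>
  rcases S.eq_empty_or_nonempty with rfl | hS
  · exact ⟨∅, ⟨by simp, by simp⟩, by simp, by simp⟩
  set s := S.min' hS
  have hs : s ∈ S := S.min'_mem hS
  have hsmin : ∀ t ∈ S, s ≤ t := fun t ht => S.min'_le t ht
  have hms := hm.one_le hs hsmin
  have hsum' : ∑ p ∈ S.erase s, m p + m s = #(S.erase s) + 1 := by
    rw [sum_erase_add _ _ hs, hsum, card_erase_add_one hs]
  have hsub :
      (↑(S.erase s) : Set α) ×ˢ (↑(S.erase s) : Set α) ⊆ (S : Set α) ×ˢ (S : Set α) :=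
    Set.prod_mono (coe_subset.2 (erase_subset _ _)) (coe_subset.2 (erase_subset _ _))
  rcases hms.eq_or_lt with hms1 | hms2
  · obtain ⟨A, hA, hAS, hAm⟩ :=
      ih _ (erase_ssubset hs) (hm.erase_of_eq_one hs hms1.symm) (by omega)
    obtain ⟨hiso_s, hiso⟩ := hA.blockSize_isolated hs fun q hq =>
      ⟨(mem_erase.1 (hAS hq).1).1, (mem_erase.1 (hAS hq).2).1⟩
    refine ⟨A, hA, hAS.trans hsub, fun p hp => ?_⟩
    by_cases hps : p = s
    · rw [hps, hiso_s, hms1]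
    · rw [hiso p hps, hAm p (mem_erase.2 ⟨hps, hp⟩)]
  · have hZ : ∃ j ∈ S, m j = 0 := by
      by_contra! hZ
      have : #(S.erase s) ≤ ∑ p ∈ S.erase s, m p := by
        simpa using card_nsmul_le_sum (S.erase s) m 1 fun p hp =>
          Nat.one_le_iff_ne_zero.2 (hZ p (mem_of_mem_erase hp))
      omega
    obtain ⟨j, ⟨hj, hmj⟩, hjmin⟩ := wellFounded_lt.has_min {p | p ∈ S ∧ m p = 0} hZ
    replace hjmin : ∀ p ∈ S, p < j → m p ≠ 0 := fun p hp hpj hp0 =>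
      hjmin p ⟨hp, hp0⟩ hpj
    have hsj : s < j := (hsmin j hj).lt_of_ne fun h => by rw [← h] at hmj; omega
    obtain ⟨A', hA', hA'S, hA'm⟩ :=
      ih _ (erase_ssubset hs) (hm.erase_update hs hj hsj hmj hjmin)
      (by rw [sum_erase_update hs hj hsj.ne hmj hms]; simp [hsum, card_erase_of_mem hs])
    obtain ⟨hA, hAm⟩ := hA'.insert_blockSize_eq hA'S hs hsmin hj hmj hjmin hms2 hA'm
    exact ⟨_, hA, Set.insert_subset ⟨hs, hj⟩ (hA'S.trans hsub), hAm⟩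

end Dyck

end NonnestingPartitions

section FiberwiseMonotone

variable {X Y P : Type*} [LinearOrder X] [LinearOrder Y] {g : X → P} {f : Y → P}

theorem exists_equiv_strictMono_on_fibers [Fintype X] [Fintype Y] [DecidableEq P]
    (hcard : ∀ p, Fintype.card {x // g x = p} = Fintype.card {y // f y = p}) :
    ∃ e : X ≃ Y, (∀ x, f (e x) = g x) ∧ ∀ x x', g x = g x' → x < x' → e x < e x' := by
  let iso : ∀ p, {x // g x = p} ≃o {y // f y = p} := fun p =>
    (Fintype.orderIsoFinOfCardEq _ rfl).symm.trans (Fintype.orderIsoFinOfCardEq _ (hcard p).symm)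
  let e : X ≃ Y := (Equiv.sigmaFiberEquiv g).symm.trans
    ((Equiv.sigmaCongrRight fun p => (iso p).toEquiv).trans (Equiv.sigmaFiberEquiv f))
  have he : ∀ x p (h : g x = p), e x = iso p ⟨x, h⟩ := by rintro x _ rfl; rfl
  refine ⟨e, fun x => (he x _ rfl) ▸ (iso (g x) ⟨x, rfl⟩).2, fun x x' hxx' hlt => ?_⟩
  rw [he x _ rfl, he x' _ hxx'.symm]
  exact (iso (g x)).strictMono (Subtype.mk_lt_mk.2 hlt)

theorem eq_of_strictMono_on_fibers [Finite X] {e e' : X ≃ Y} (he : ∀ x, f (e x) = g x)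
    (he' : ∀ x, f (e' x) = g x) (hmono : ∀ x x', g x = g x' → x < x' → e x < e x')
    (hmono' : ∀ x x', g x = g x' → x < x' → e' x < e' x') : e = e' := by
  ext x
  have hrange : ∀ {e : X ≃ Y}, (∀ x, f (e x) = g x) →
      Set.range (fun z : {z // g z = g x} => e z) = {y | f y = g x} := fun {e} he =>
    Set.ext fun y => ⟨by rintro ⟨z, rfl⟩; exact (he z).trans z.2,
      fun hy => ⟨⟨e.symm y, by rw [← he, Equiv.apply_symm_apply]; exact hy⟩,
        e.apply_symm_apply y⟩⟩
  have hsm : ∀ {e : X ≃ Y}, (∀ x x', g x = g x' → x < x' → e x < e x') →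
      StrictMono fun z : {z // g z = g x} => e z := fun hmono z z' hzz' =>
    hmono z z' (z.2.trans z'.2.symm) hzz'
  have := ((hsm hmono).range_inj (hsm hmono')).1 ((hrange he).trans (hrange he').symm)
  exact congrFun this ⟨x, rfl⟩

end FiberwiseMonotone

section RootIdeals

variable {n : ℕ} {I A : Set (Fin n × Fin n)}

def rootMinimals (I : Set (Fin n × Fin n)) : Set (Fin n × Fin n) :=
  {a | a ∈ I ∧ ∀ b ∈ I, a.1 ≤ b.1 → b.2 ≤ a.2 → b = a}

def rootUpperClosure (A : Set (Fin n × Fin n)) : Set (Fin n × Fin n) :=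
  {q | q.1 < q.2 ∧ ∃ a ∈ A, q.1 ≤ a.1 ∧ a.2 ≤ q.2}

lemma isUpperIdeal_diff_singleton_iff (hI : IsUpperIdeal n I) {a : Fin n × Fin n} (ha : a ∈ I) :
    IsUpperIdeal n (I \ {a}) ↔ a ∈ rootMinimals I := by
  refine ⟨fun h => ⟨ha, fun b hb h1 h2 => ?_⟩,
    fun hmin => ⟨fun p hp => hI.1 p hp.1, ?_⟩⟩
  · by_contra hba
    exact (h.2 b a ⟨hb, hba⟩ h1 h2).2 rfl
  · rintro p q ⟨hp, hpa⟩ h1 h2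
    refine ⟨hI.2 p q hp h1 h2, fun hqa => hpa ?_⟩
    obtain rfl : q = a := hqa
    exact hmin.2 p hp h1 h2

lemma IsUpperIdeal.isNonnesting_rootMinimals (hI : IsUpperIdeal n I) :
    IsNonnesting (rootMinimals I) :=
  ⟨fun p hp => hI.1 p hp.1, fun _ hp q hq h1 h2 => (hp.2 q hq.1 h1 h2).symm⟩

lemma isUpperIdeal_rootUpperClosure : IsUpperIdeal n (rootUpperClosure A) :=
  ⟨fun _ hp => hp.1, fun _ _ ⟨hp, a, ha, h1, h2⟩ hq1 hq2 =>
    ⟨hq1.trans_lt (hp.trans_le hq2), a, ha, hq1.trans h1, h2.trans hq2⟩⟩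

lemma IsNonnesting.rootMinimals_rootUpperClosure (hA : IsNonnesting A) :
    rootMinimals (rootUpperClosure A) = A := by
  ext a
  refine ⟨fun ⟨⟨_, b, hb, h1, h2⟩, hmin⟩ => ?_,
    fun ha => ⟨⟨hA.1 a ha, a, ha, le_rfl, le_rfl⟩, ?_⟩⟩
  · rwa [← hmin b ⟨hA.1 b hb, b, hb, le_rfl, le_rfl⟩ h1 h2]
  · rintro b ⟨-, c, hc, hb1, hb2⟩ h1 h2
    obtain rfl := hA.2 a ha c hc (h1.trans hb1) (hb2.trans h2)
    exact Prod.ext (le_antisymm hb1 h1) (le_antisymm h2 hb2)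

lemma IsUpperIdeal.exists_mem_rootMinimals (hI : IsUpperIdeal n I) {q : Fin n × Fin n}
    (hq : q ∈ I) : ∃ a ∈ rootMinimals I, q.1 ≤ a.1 ∧ a.2 ≤ q.2 := by
  obtain ⟨a, ⟨haI, h1, h2⟩, hmin⟩ :=
    (InvImage.wf (fun b : Fin n × Fin n => (b.2 : ℕ) - b.1) wellFounded_lt).has_min
      {b | b ∈ I ∧ q.1 ≤ b.1 ∧ b.2 ≤ q.2} ⟨q, hq, le_rfl, le_rfl⟩
  refine ⟨a, ⟨haI, fun b hb hb1 hb2 => ?_⟩, h1, h2⟩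
  have := hmin b ⟨hb, h1.trans hb1, hb2.trans h2⟩
  have hb := hI.1 b hb
  simp only [InvImage, Fin.le_def, Fin.lt_def] at this hb hb1 hb2
  exact Prod.ext (Fin.ext (by omega)) (Fin.ext (by omega))

lemma IsUpperIdeal.rootUpperClosure_rootMinimals (hI : IsUpperIdeal n I) :
    rootUpperClosure (rootMinimals I) = I := by
  ext q
  refine ⟨fun ⟨_, a, ha, h1, h2⟩ => hI.2 a q ha.1 h1 h2, fun hq => ⟨hI.1 q hq, ?_⟩⟩
  exact hI.exists_mem_rootMinimals hq

end RootIdeals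

section ShiPairs

variable {n : ℕ}

abbrev ShiPair (n : ℕ) :=
  {p : Equiv.Perm (Fin n) × Set (Fin n × Fin n) //
    IsUpperIdeal n p.2 ∧ ∀ α ∈ p.2, IsUpperIdeal n (p.2 \ {α}) → p.1 α.1 < p.1 α.2}

lemma IsUpperIdeal.forall_diff_singleton_iff {I : Set (Fin n × Fin n)} (hI : IsUpperIdeal n I)
    (w : Equiv.Perm (Fin n)) :
    (∀ α ∈ I, IsUpperIdeal n (I \ {α}) → w α.1 < w α.2) ↔
      ∀ α ∈ rootMinimals I, w α.1 < w α.2 :=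
  ⟨fun h α hα => h α hα.1 ((isUpperIdeal_diff_singleton_iff hI hα.1).2 hα),
    fun h α hα hαI => h α ((isUpperIdeal_diff_singleton_iff hI hα).1 hαI)⟩

lemma card_filter_chainMin_symm (A : Set (Fin n × Fin n)) (w : Equiv.Perm (Fin n)) (q : Fin n) :
    #{a | chainMin A (w.symm a) = q} = blockSize univ A q :=
  card_equiv w.symm fun a => by simp

lemma IsNonnesting.isParking_chainMin_symm {A : Set (Fin n × Fin n)} (hA : IsNonnesting A)
    (w : Equiv.Perm (Fin n)) : IsParking fun a => ((chainMin A (w.symm a) : Fin n) : ℕ) := by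
  intro j hj
  rw [Fintype.card_fin] at hj
  calc j = #{k : Fin n | (k : ℕ) < j} := by rw [Fin.card_filter_val_lt, min_eq_right hj]
    _ ≤ #{k : Fin n | ((chainMin A k : Fin n) : ℕ) < j} := by
      refine card_le_card fun k hk => ?_
      simp only [mem_filter, mem_univ, true_and] at hk ⊢
      exact (Fin.le_def.1 (hA.chainMin_le k)).trans_lt hk
    _ = #{a | ((chainMin A (w.symm a) : Fin n) : ℕ) < j} :=
      (card_equiv w.symm fun a => by simp).symm

lemma IsParking.isDyck {f : Fin n → Fin n} (hf : IsParking fun a => (f a : ℕ)) :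
    IsDyck univ fun q => #{a | f a = q} := by
  intro t
  rw [sum_card_fiberwise_eq_card_filter, filter_ge_eq_Iic, Fin.card_Iic]
  refine (hf (t + 1) (by simp)).trans (card_le_card fun a ha => ?_)
  simp only [mem_filter, mem_univ, true_and, mem_Iic] at ha ⊢
  exact Fin.le_def.2 (Nat.lt_succ_iff.1 ha)

noncomputable def shiToParking (n : ℕ) :
    ShiPair n → {f : Fin n → Fin n // IsParking fun a => (f a : ℕ)} :=
  fun p => ⟨fun a => chainMin (rootMinimals p.1.2) (p.1.1.symm a),
    p.2.1.isNonnesting_rootMinimals.isParking_chainMin_symm p.1.1⟩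

lemma shiToParking_injective : Function.Injective (shiToParking n) := by
  rintro ⟨⟨w, I⟩, hI, hw⟩ ⟨⟨w', I'⟩, hI', hw'⟩ h
  have hf := congrArg Subtype.val h
  dsimp only [shiToParking] at hI hw hI' hw' hf
  have hA := hI.isNonnesting_rootMinimals
  have hA' := hI'.isNonnesting_rootMinimals
  have hAA' : rootMinimals I = rootMinimals I' :=
    hA.eq_of_blockSize_eq (S := univ) hA' (by simp) (by simp) fun q _ => by
      rw [← card_filter_chainMin_symm _ w, ← card_filter_chainMin_symm (rootMinimals I') w']
      simp only [congrFun hf]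
  have hII' : I = I' := by
    rw [← hI.rootUpperClosure_rootMinimals, hAA', hI'.rootUpperClosure_rootMinimals]
  subst hII'
  rw [hI.forall_diff_singleton_iff] at hw hw'
  have hww' : w = w' := by
    refine eq_of_strictMono_on_fibers (f := fun a => chainMin (rootMinimals I) (w.symm a))
      (fun k => by simp) (fun k => by rw [congrFun hf]; simp)
      (fun k k' => hA.lt_of_chainMin_eq hw) (fun k k' => hA.lt_of_chainMin_eq hw')
  subst hww'
  rfl

lemma shiToParking_surjective : Function.Surjective (shiToParking n) := by
  rintro ⟨f, hf⟩
  obtain ⟨A, hA, -, hAm⟩ := exists_isNonnesting_blockSize_eq hf.isDyck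
    (by rw [sum_card_fiberwise_eq_card_filter]; simp)
  obtain ⟨w, hwf, hwmono⟩ := exists_equiv_strictMono_on_fibers (g := chainMin A) (f := f)
    fun q => by rw [Fintype.card_subtype, Fintype.card_subtype, ← hAm q (mem_univ q)]; rfl
  have hIA := hA.rootMinimals_rootUpperClosure
  refine ⟨⟨(w, rootUpperClosure A), isUpperIdeal_rootUpperClosure, ?_⟩, ?_⟩
  · rw [isUpperIdeal_rootUpperClosure.forall_diff_singleton_iff, hIA]
    exact fun α hα => hwmono _ _ (hA.chainMin_of_mem hα).symm (hA.lt hα)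
  · ext a
    simp [shiToParking, hIA, ← hwf]

end ShiPairs

theorem pak_stanley_count_general (n : ℕ) :
    Nat.card {p : Equiv.Perm (Fin n) × Set (Fin n × Fin n) //
        IsUpperIdeal n p.2 ∧
        ∀ α ∈ p.2, IsUpperIdeal n (p.2 \ {α}) → p.1 α.1 < p.1 α.2}
      = (n + 1) ^ (n - 1) := by
  rw [← card_parkingFunctions n]
  exact Nat.card_eq_of_bijective (shiToParking n)
    ⟨shiToParking_injective, shiToParking_surjective⟩

/-- Pak–Stanley: the chambers of `Shi(n)` correspond to pairs `(w, I)` of a permutation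
`w ∈ S_n` and an upper ideal `I` of positive roots all of whose minimal elements
(those `α ∈ I` with `I \ {α}` still an ideal) are non-inversions of `w`; there are
`(n+1)^(n-1)` such pairs. -/
theorem pak_stanley_count (n : ℕ) (hn : 1 ≤ n) :
    Nat.card {p : Equiv.Perm (Fin n) × Set (Fin n × Fin n) //
        IsUpperIdeal n p.2 ∧
        ∀ α ∈ p.2, IsUpperIdeal n (p.2 \ {α}) → p.1 α.1 < p.1 α.2}
      = (n + 1) ^ (n - 1) :=
  pak_stanley_count_general n
end
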